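/- arXiv:2510.27638 — 4 statements merged into one kernel-verified Lean document; each statement's English description precedes it below -/
import Mathlib

section
/- Let ε > 0, let L be a class of losses ℓ: [0,1] × {0,1} → [−1,1] each of bounded variation (L ⊆ L_BV), let G be a set of groups each with P_g > 0, and let H be a nonempty hypothesis class. If a predictor p*: X → [0,1] is (G,H,ε)-step calibrated, then p* is an (L,G,H,20ε)-panpredictor; that is, deterministic step calibration implies deterministic panprediction with error degraded only by a universal constant factor (one may take the constant 20). -/
/-!
Write `r = y - p⋆(x)` for the residual and `Δ a = ℓ(a, 1) - ℓ(a, 0)`. Since `k_ℓ(q)` minimises the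
expected loss at label probability `q`, pointwise
`ℓ(k_ℓ(p⋆), y) - ℓ(h, y) ≤ r · Δ(k_ℓ(p⋆)) - r · Δ(h)`, so it suffices to bound `E[r · m(W)]` for
`W ∈ {p⋆, h}` and suitable `m`. Step calibration with `w = 1` (resp. `v = 1`) bounds
`E[r · 1{W ≤ v}]` by `c = ε √(1 / P_g)`; by monotone convergence the same bound holds for
`E[r · 1{W ∈ S}]` with `S` any lower set, and the layer-cake formula turns this into a bound on
`E[r · m(W)]` for every bounded monotone `m`. Comparing the optimality of `k_ℓ` at two label
probabilities shows that `q ↦ Δ(k_ℓ(q))` is antitone, which gives `6c`; and `ℓ(·, y)` is half the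
difference of the monotone functions `V ± ℓ(·, y)`, `V` its variation function, which gives `5c`
for each label. In total the regret is at most `16c ≤ 20c`.
-/

open MeasureTheory ProbabilityTheory Set

noncomputable section

/-- Real value of a Boolean label. -/
def lab (y : Bool) : ℝ := if y then 1 else 0

/-- Conditional expectation of `f` under `D`, given that the group membership
function `g` evaluates to `true` on the context. -/
def condE {X : Type*} [MeasurableSpace X] (D : Measure (X × Bool)) (g : X → Bool)
    (f : X × Bool → ℝ) : ℝ :=
  ∫ z, f z ∂(D[|{z : X × Bool | g z.1 = true}])

/-- Probability of group `g` under `D`. -/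
def Pg {X : Type*} [MeasurableSpace X] (D : Measure (X × Bool)) (g : X → Bool) : ℝ :=
  (D {z : X × Bool | g z.1 = true}).toReal

/-- The set of all partition sums `∑ |f(z_{j+1}) - f(z_j)|` over finite partitions
`0 = z_0 < z_1 < ⋯ < z_m = 1` of `[0,1]`.  `V(f) ≤ C` iff every element is `≤ C`. -/
def partitionSums (f : ℝ → ℝ) : Set ℝ :=
  {S | ∃ (m : ℕ) (z : ℕ → ℝ), z 0 = 0 ∧ z m = 1 ∧ (∀ i < m, z i < z (i + 1)) ∧
      S = ∑ i ∈ Finset.range m, |f (z (i + 1)) - f (z i)|}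

open Filter Topology

section LowerSets

variable {α : Type*} [ConditionallyCompleteLinearOrder α] {S : Set α}

lemma IsLowerSet.eq_empty_or_univ_or_Iic_or_Iio (hS : IsLowerSet S) :
    S = ∅ ∨ S = univ ∨ (∃ a, S = Iic a) ∨ ∃ a, S = Iio a := by
  rcases S.eq_empty_or_nonempty with hempty | hne
  · exact Or.inl hempty
  by_cases hbdd : BddAbove S
  · have hS_eq : ⋃ x ∈ S, Iic x = S :=
      Subset.antisymm (iUnion₂_subset fun x hx _ hy => hS hy hx)
        fun x hx => mem_biUnion hx (mem_Iic.mpr le_rfl)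
    have hlub := isLUB_csSup hne hbdd
    by_cases hmem : sSup S ∈ S
    · exact Or.inr (Or.inr (Or.inl ⟨_, hS_eq ▸ hlub.biUnion_Iic_eq_Iic hmem⟩))
    · exact Or.inr (Or.inr (Or.inr ⟨_, hS_eq ▸ hlub.biUnion_Iic_eq_Iio hmem⟩))
  · refine Or.inr (Or.inl (eq_univ_of_forall fun x => ?_))
    obtain ⟨y, hy, hxy⟩ := not_bddAbove_iff.mp hbdd x
    exact hS hxy.le hy

end LowerSets

section IccExtend

variable {α β : Type*} [LinearOrder α] [Preorder β] {a b : α} {f : α → β}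

lemma MonotoneOn.monotone_IccExtend (hf : MonotoneOn f (Icc a b)) (h : a ≤ b) :
    Monotone (IccExtend h fun x : Icc a b => f x) :=
  (monotoneOn_iff_monotone.mp hf).IccExtend h

lemma AntitoneOn.antitone_IccExtend (hf : AntitoneOn f (Icc a b)) (h : a ≤ b) :
    Antitone (IccExtend h fun x : Icc a b => f x) :=
  (antitoneOn_iff_antitone.mp hf).dual_right.IccExtend h

end IccExtend

section Variation

lemma sum_abs_sub_le_of_partitionSums_le {f : ℝ → ℝ} {C : ℝ}
    (hf : ∀ S ∈ partitionSums f, S ≤ C) {n : ℕ} {u : ℕ → ℝ} (hu : StrictMonoOn u (Iic n))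
    (hmem : ∀ i ∈ Iic n, u i ∈ Icc (0 : ℝ) 1) :
    ∑ i ∈ Finset.range n, |f (u (i + 1)) - f (u i)| ≤ C := by
  -- pad `u` by `0` in front and by `1` at the end, unless it already starts or ends there
  obtain ⟨a, ha⟩ : ∃ a : ℕ, (a = 0 ∧ u 0 = 0) ∨ (a = 1 ∧ 0 < u 0) := by
    rcases (hmem 0 (mem_Iic.mpr (Nat.zero_le n))).1.eq_or_lt with h | h
    exacts [⟨0, Or.inl ⟨rfl, h.symm⟩⟩, ⟨1, Or.inr ⟨rfl, h⟩⟩]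
  obtain ⟨e, he⟩ : ∃ e : ℕ, (e = 0 ∧ u n = 1) ∨ (e = 1 ∧ u n < 1) := by
    rcases (hmem n (mem_Iic.mpr le_rfl)).2.eq_or_lt with h | h
    exacts [⟨0, Or.inl ⟨rfl, h⟩⟩, ⟨1, Or.inr ⟨rfl, h⟩⟩]
  set z : ℕ → ℝ := fun i => if i < a then 0 else if i ≤ n + a then u (i - a) else 1
  have hz {i : ℕ} (hi : i ≤ n) : z (i + a) = u i := by
    simp only [z, if_neg (show ¬ i + a < a by omega), if_pos (show i + a ≤ n + a by omega),
      Nat.add_sub_cancel]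
  have hz0 : z 0 = 0 := by
    rcases ha with ⟨rfl, h⟩ | ⟨rfl, -⟩
    · simpa [z] using h
    · simp [z]
  have hzm : z (n + a + e) = 1 := by
    rcases he with ⟨rfl, h⟩ | ⟨rfl, -⟩
    · rw [add_zero, hz le_rfl, h]
    · simp only [z, if_neg (show ¬ n + a + 1 < a by omega),
        if_neg (show ¬ n + a + 1 ≤ n + a by omega)]
  have hzstrict : ∀ i < n + a + e, z i < z (i + 1) := by
    intro i hi
    rcases Nat.lt_or_ge i a with hia | hia
    · rcases ha with ⟨rfl, -⟩ | ⟨rfl, hu0⟩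
      · omega
      obtain rfl : i = 0 := by omega
      rwa [hz0, hz (Nat.zero_le n)]
    obtain ⟨j, rfl⟩ := Nat.exists_eq_add_of_le' hia
    rcases Nat.lt_or_ge j n with hjn | hjn
    · rw [hz hjn.le, add_right_comm, hz hjn]
      exact hu (mem_Iic.mpr hjn.le) (mem_Iic.mpr hjn) (Nat.lt_succ_self j)
    · rcases he with ⟨rfl, -⟩ | ⟨rfl, hun⟩
      · omega
      obtain rfl : j = n := by omega
      rwa [hz le_rfl, show z (j + a + 1) = 1 from if_neg (by omega) |>.trans (if_neg (by omega))]
  calc ∑ i ∈ Finset.range n, |f (u (i + 1)) - f (u i)|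
      = ∑ i ∈ Finset.range n, |f (z (i + a + 1)) - f (z (i + a))| := by
        refine Finset.sum_congr rfl fun i hi => ?_
        rw [Finset.mem_range] at hi
        rw [add_right_comm, hz hi, hz hi.le]
    _ ≤ ∑ i ∈ Finset.range (n + a + e), |f (z (i + 1)) - f (z i)| := by
        have hmap := Finset.sum_map (Finset.range n) (addRightEmbedding a)
          fun i => |f (z (i + 1)) - f (z i)|
        simp only [addRightEmbedding_apply] at hmap
        rw [← hmap]
        refine Finset.sum_le_sum_of_subset_of_nonneg (fun j => ?_) fun _ _ _ => abs_nonneg _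
        simp only [Finset.mem_map, Finset.mem_range, addRightEmbedding_apply]
        omega
    _ ≤ C := hf _ ⟨n + a + e, z, hz0, hzm, hzstrict, rfl⟩

lemma eVariationOn_Icc_le_of_partitionSums_le {f : ℝ → ℝ} {C : ℝ}
    (hf : ∀ S ∈ partitionSums f, S ≤ C) : eVariationOn f (Icc 0 1) ≤ ENNReal.ofReal C := by
  rw [eVariationOn.eVariationOn_eq_strictMonoOn]
  refine iSup_le fun ⟨n, u, hu, hmem⟩ => ?_
  simp only [edist_dist, Real.dist_eq]
  rw [← ENNReal.ofReal_sum_of_nonneg fun _ _ => abs_nonneg _]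
  exact ENNReal.ofReal_le_ofReal (sum_abs_sub_le_of_partitionSums_le hf hu hmem)

end Variation

section Losses

variable (ℓ : ℝ → Bool → ℝ)

def expectedLoss (q a : ℝ) : ℝ := q * ℓ a true + (1 - q) * ℓ a false

def lossDiff (a : ℝ) : ℝ := ℓ a true - ℓ a false

variable {ℓ}

lemma loss_sub_le_of_expectedLoss_le {q a b : ℝ} (hab : expectedLoss ℓ q a ≤ expectedLoss ℓ q b)
    (y : Bool) : ℓ a y - ℓ b y ≤ (lab y - q) * lossDiff ℓ a - (lab y - q) * lossDiff ℓ b := by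
  unfold expectedLoss at hab
  cases y <;> simp only [lossDiff, lab] <;> norm_num <;> linarith

lemma lossDiff_le_of_expectedLoss_le {q q' a a' : ℝ} (hq : q < q')
    (ha : expectedLoss ℓ q a ≤ expectedLoss ℓ q a')
    (ha' : expectedLoss ℓ q' a' ≤ expectedLoss ℓ q' a) :
    lossDiff ℓ a' ≤ lossDiff ℓ a := by
  unfold expectedLoss at ha ha'
  have : 0 ≤ (q' - q) * (lossDiff ℓ a - lossDiff ℓ a') := by unfold lossDiff; linarith
  exact sub_nonneg.mp (nonneg_of_mul_nonneg_right this (sub_pos.mpr hq))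

lemma abs_lab_sub_le_one {q : ℝ} (hq : q ∈ Icc (0 : ℝ) 1) (y : Bool) : |lab y - q| ≤ 1 := by
  rw [abs_le]
  cases y <;> simp only [lab] <;> constructor <;> norm_num <;> linarith [hq.1, hq.2]

end Losses

section ThresholdTests

variable {Z : Type*} [MeasurableSpace Z] {μ : Measure Z} {r W : Z → ℝ} {c : ℝ}

lemma abs_setIntegral_iUnion_le {s : ℕ → Set Z} (hs : ∀ n, MeasurableSet (s n))
    (hmono : Monotone s) (hr : Integrable r μ) (hc : ∀ n, |∫ z in s n, r z ∂μ| ≤ c) :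
    |∫ z in ⋃ n, s n, r z ∂μ| ≤ c :=
  le_of_tendsto' (tendsto_setIntegral_of_monotone hs hmono hr.integrableOn).abs hc

lemma abs_setIntegral_preimage_Iic_le_of_abs_integral_mul_ite_le (hW : Measurable W)
    (hW01 : ∀ z, W z ∈ Icc (0 : ℝ) 1)
    (hc : ∀ v ∈ Icc (0 : ℝ) 1, |∫ z, r z * (if W z ≤ v then 1 else 0) ∂μ| ≤ c) (v : ℝ) :
    |∫ z in W ⁻¹' Iic v, r z ∂μ| ≤ c := by
  have hset (v : ℝ) : ∫ z in W ⁻¹' Iic v, r z ∂μ = ∫ z, r z * (if W z ≤ v then 1 else 0) ∂μ := by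
    rw [← integral_indicator (hW measurableSet_Iic)]
    congr 1 with z
    by_cases hz : W z ≤ v <;> simp [hz]
  rcases lt_or_ge v 0 with hv0 | hv0
  · have hempty : W ⁻¹' Iic v = ∅ :=
      eq_empty_of_forall_notMem fun z hz => (hv0.trans_le (hW01 z).1).not_ge hz
    simpa [hempty] using (abs_nonneg _).trans (hc 0 ⟨le_rfl, zero_le_one⟩)
  rcases le_or_gt v 1 with hv1 | hv1
  · exact hset v ▸ hc v ⟨hv0, hv1⟩
  · have hall : W ⁻¹' Iic v = W ⁻¹' Iic 1 := by
      ext z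
      simp only [mem_preimage, mem_Iic]
      exact ⟨fun _ => (hW01 z).2, fun h => h.trans hv1.le⟩
    exact hall ▸ hset 1 ▸ hc 1 ⟨zero_le_one, le_rfl⟩

lemma integral_le_add_sub_of_sub_le_sub {f₁ f₂ g₁ g₂ : Z → ℝ} (hf₁ : Integrable f₁ μ)
    (hf₂ : Integrable f₂ μ) (hg₁ : Integrable g₁ μ) (hg₂ : Integrable g₂ μ)
    (h : ∀ z, f₁ z - f₂ z ≤ g₁ z - g₂ z) :
    ∫ z, f₁ z ∂μ ≤ ∫ z, f₂ z ∂μ + (∫ z, g₁ z ∂μ - ∫ z, g₂ z ∂μ) := by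
  have : ∫ z, (f₁ z - f₂ z) ∂μ ≤ ∫ z, (g₁ z - g₂ z) ∂μ :=
    integral_mono (hf₁.sub hf₂) (hg₁.sub hg₂) h
  rw [integral_sub hf₁ hf₂, integral_sub hg₁ hg₂] at this
  linarith

lemma abs_integral_mul_le_of_abs_setIntegral_superlevel_le [IsFiniteMeasure μ] {F : Z → ℝ}
    {B : ℝ} (hr : Integrable r μ) (hF : Measurable F) (hB : 0 ≤ B) (hF0 : ∀ z, 0 ≤ F z)
    (hFB : ∀ z, F z ≤ B) (hc : ∀ t, |∫ z in {z | t < F z}, r z ∂μ| ≤ c) :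
    |∫ z, r z * F z ∂μ| ≤ B * c := by
  set ν : Measure ℝ := volume.restrict (Ioo 0 B)
  set G : Z × ℝ → ℝ := {p | p.2 < F p.1}.indicator fun p => r p.1
  have hG : Integrable G (μ.prod ν) :=
    (hr.comp_fst ν).indicator (measurableSet_lt measurable_snd (hF.comp measurable_fst))
  have hslice_t (t : ℝ) : ∫ z, G (z, t) ∂μ = ∫ z in {z | t < F z}, r z ∂μ := by
    rw [← integral_indicator (measurableSet_lt measurable_const hF)]
    rfl
  have hslice_z (z : Z) : ∫ t, G (z, t) ∂ν = r z * F z := by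
    have : (fun t => G (z, t)) = (Iio (F z)).indicator fun _ => r z := rfl
    rw [this, integral_indicator measurableSet_Iio, Measure.restrict_restrict measurableSet_Iio,
      integral_const, smul_eq_mul, measureReal_restrict_apply_univ, inter_comm, Ioo_inter_Iio,
      min_eq_right (hFB z), Real.volume_real_Ioo_of_le (hF0 z), sub_zero, mul_comm]
  calc |∫ z, r z * F z ∂μ| = |∫ t, ∫ z in {z | t < F z}, r z ∂μ ∂ν| := by
        simp_rw [← hslice_z, ← hslice_t, ← integral_prod _ hG, integral_prod_symm _ hG]
    _ ≤ c * volume.real (Ioo 0 B) := by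
        simpa only [ν, Real.norm_eq_abs] using
          norm_setIntegral_le_of_norm_le_const (f := fun t => ∫ z in {z | t < F z}, r z ∂μ)
            measure_Ioo_lt_top fun t _ => (Real.norm_eq_abs _).trans_le (hc t)
    _ = B * c := by rw [Real.volume_real_Ioo_of_le hB, sub_zero, mul_comm]

variable (hW : Measurable W) (hr : Integrable r μ) (hc : ∀ v, |∫ z in W ⁻¹' Iic v, r z ∂μ| ≤ c)
include hW hr hc

lemma abs_setIntegral_preimage_Iio_le (v : ℝ) : |∫ z in W ⁻¹' Iio v, r z ∂μ| ≤ c := by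
  have hlim : Tendsto (fun n : ℕ => v - 1 / ((n : ℝ) + 1)) atTop (𝓝 v) := by
    simpa using tendsto_const_nhds.sub (tendsto_one_div_add_atTop_nhds_zero_nat (𝕜 := ℝ))
  have hunion : ⋃ n : ℕ, W ⁻¹' Iic (v - 1 / ((n : ℝ) + 1)) = W ⁻¹' Iio v := by
    rw [← preimage_iUnion, iUnion_Iic_eq_Iio_of_lt_of_tendsto (fun n => ?_) hlim]
    simp only [sub_lt_self_iff]; positivity
  rw [← hunion]
  refine abs_setIntegral_iUnion_le (fun n => hW measurableSet_Iic) (fun m n hmn => ?_) hr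
    fun n => hc _
  refine preimage_mono (Iic_subset_Iic.mpr ?_)
  gcongr

lemma abs_integral_le_of_abs_setIntegral_preimage_Iic_le : |∫ z, r z ∂μ| ≤ c := by
  have hunion : ⋃ n : ℕ, W ⁻¹' Iic (n : ℝ) = univ := by
    rw [← preimage_iUnion, iUnion_Iic_of_not_bddAbove_range, preimage_univ]
    refine not_bddAbove_iff.mpr fun x => ?_
    obtain ⟨n, hn⟩ := exists_nat_gt x
    exact ⟨n, mem_range_self n, hn⟩
  rw [← setIntegral_univ, ← hunion]
  exact abs_setIntegral_iUnion_le (fun n => hW measurableSet_Iic)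
    (fun m n hmn => preimage_mono (Iic_subset_Iic.mpr (by exact_mod_cast hmn))) hr fun n => hc _

lemma abs_setIntegral_preimage_le_of_isLowerSet {S : Set ℝ} (hS : IsLowerSet S) :
    |∫ z in W ⁻¹' S, r z ∂μ| ≤ c := by
  rcases hS.eq_empty_or_univ_or_Iic_or_Iio with rfl | rfl | ⟨a, rfl⟩ | ⟨a, rfl⟩
  · simpa using (abs_nonneg _).trans (hc 0)
  · simpa using abs_integral_le_of_abs_setIntegral_preimage_Iic_le hW hr hc
  · exact hc a
  · exact abs_setIntegral_preimage_Iio_le hW hr hc a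

variable [IsFiniteMeasure μ]

lemma abs_integral_mul_comp_le_of_antitone {m : ℝ → ℝ} {a b : ℝ} (hm : Antitone m)
    (ha : ∀ q, a ≤ m q) (hb : ∀ q, m q ≤ b) :
    |∫ z, r z * m (W z) ∂μ| ≤ (|a| + (b - a)) * c := by
  have hint : Integrable (fun z => r z * (m (W z) - a)) μ :=
    hr.mul_bdd (c := b - a) ((hm.measurable.comp hW).sub_const a).aestronglyMeasurable
      (Eventually.of_forall fun z => by
        rw [Real.norm_eq_abs, abs_of_nonneg (sub_nonneg.mpr (ha _))]
        linarith [hb (W z)])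
  have hsplit : ∫ z, r z * m (W z) ∂μ = a * ∫ z, r z ∂μ + ∫ z, r z * (m (W z) - a) ∂μ := by
    rw [← integral_const_mul, ← integral_add (hr.const_mul a) hint]
    congr 1 with z
    ring
  have hshift : |∫ z, r z * (m (W z) - a) ∂μ| ≤ (b - a) * c := by
    refine abs_integral_mul_le_of_abs_setIntegral_superlevel_le hr
      ((hm.measurable.comp hW).sub_const a) (by linarith [ha 0, hb 0])
      (fun z => sub_nonneg.mpr (ha _)) (fun z => sub_le_sub_right (hb _) a) fun t => ?_
    have hlower : IsLowerSet {q | t + a < m q} := fun _ _ hle hlt => lt_of_lt_of_le hlt (hm hle)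
    convert abs_setIntegral_preimage_le_of_isLowerSet hW hr hc hlower using 4
    ext z
    exact lt_sub_iff_add_lt (a := t) (b := a) (c := m (W z))
  calc |∫ z, r z * m (W z) ∂μ|
      ≤ |a| * |∫ z, r z ∂μ| + |∫ z, r z * (m (W z) - a) ∂μ| := by
        rw [hsplit, ← abs_mul]; exact abs_add_le _ _
    _ ≤ |a| * c + (b - a) * c := by
        gcongr
        exact abs_integral_le_of_abs_setIntegral_preimage_Iic_le hW hr hc
    _ = (|a| + (b - a)) * c := by ring

lemma abs_integral_mul_comp_le_of_monotone {m : ℝ → ℝ} {a b : ℝ} (hm : Monotone m)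
    (ha : ∀ q, a ≤ m q) (hb : ∀ q, m q ≤ b) :
    |∫ z, r z * m (W z) ∂μ| ≤ (|b| + (b - a)) * c := by
  have := abs_integral_mul_comp_le_of_antitone hW hr hc hm.neg (fun q => neg_le_neg (hb q))
    fun q => neg_le_neg (ha q)
  simpa only [Pi.neg_apply, mul_neg, integral_neg, abs_neg, sub_neg_eq_add, neg_add_eq_sub]
    using this

lemma abs_integral_mul_comp_le_of_eVariationOn_le {f : ℝ → ℝ}
    (hf : eVariationOn f (Icc 0 1) ≤ 1) (hf1 : ∀ q ∈ Icc (0 : ℝ) 1, |f q| ≤ 1)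
    (hW01 : ∀ z, W z ∈ Icc (0 : ℝ) 1) :
    |∫ z, r z * f (W z) ∂μ| ≤ 5 * c := by
  set s := Icc (0 : ℝ) 1
  have h0 : (0 : ℝ) ∈ s := left_mem_Icc.mpr zero_le_one
  have hbv : LocallyBoundedVariationOn f s :=
    BoundedVariationOn.locallyBoundedVariationOn (ne_top_of_le_ne_top ENNReal.one_ne_top hf)
  set V := variationOnFromTo f s 0
  have hV : ∀ q ∈ s, 0 ≤ V q ∧ V q ≤ 1 := fun q hq =>
    ⟨variationOnFromTo.nonneg_of_le f s hq.1,
      (le_abs_self _).trans <| (variationOnFromTo.abs_le_eVariationOn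
        (ne_top_of_le_ne_top ENNReal.one_ne_top hf)).trans <|
        ENNReal.toReal_le_of_le_ofReal zero_le_one (hf.trans ENNReal.ofReal_one.ge)⟩
  -- Jordan decomposition `f = ((V + f) - (V - f)) / 2` into monotone parts with values in `[-1, 2]`
  set mp := IccExtend zero_le_one fun q : s => V q + f q
  set mm := IccExtend zero_le_one fun q : s => V q - f q
  have hmp : Monotone mp := (variationOnFromTo.add_self_monotoneOn hbv h0).monotone_IccExtend _
  have hmm : Monotone mm := (variationOnFromTo.sub_self_monotoneOn hbv h0).monotone_IccExtend _
  have hbounds (q : ℝ) : -1 ≤ mp q ∧ mp q ≤ 2 ∧ -1 ≤ mm q ∧ mm q ≤ 2 := by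
    have hbounds_on : ∀ x ∈ s, -1 ≤ V x + f x ∧ V x + f x ≤ 2 ∧ -1 ≤ V x - f x ∧ V x - f x ≤ 2 :=
      fun x hx => by
        obtain ⟨hV0, hV1⟩ := hV x hx
        obtain ⟨hf0, hf1⟩ := abs_le.mp (hf1 x hx)
        refine ⟨?_, ?_, ?_, ?_⟩ <;> linarith
    simp only [mp, mm]
    rw [IccExtend_apply, IccExtend_apply]
    exact hbounds_on _ (projIcc 0 1 zero_le_one q).2
  have hint {m : ℝ → ℝ} (hm : Monotone m) (hmb : ∀ q, -1 ≤ m q ∧ m q ≤ 2) :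
      Integrable (fun z => r z * m (W z)) μ :=
    hr.mul_bdd (c := 2) (hm.measurable.comp hW).aestronglyMeasurable <| ae_of_all _ fun z =>
      abs_le.mpr ⟨by linarith [(hmb (W z)).1], (hmb (W z)).2⟩
  have hsplit : ∫ z, r z * f (W z) ∂μ =
      (∫ z, r z * mp (W z) ∂μ - ∫ z, r z * mm (W z) ∂μ) / 2 := by
    rw [← integral_sub (hint hmp fun q => ⟨(hbounds q).1, (hbounds q).2.1⟩)
      (hint hmm fun q => ⟨(hbounds q).2.2.1, (hbounds q).2.2.2⟩), ← integral_div]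
    congr 1 with z
    simp only [mp, mm, IccExtend_of_mem _ _ (hW01 z)]
    ring
  have hp := abs_integral_mul_comp_le_of_monotone hW hr hc hmp (fun q => (hbounds q).1)
    fun q => (hbounds q).2.1
  have hm := abs_integral_mul_comp_le_of_monotone hW hr hc hmm (fun q => (hbounds q).2.2.1)
    fun q => (hbounds q).2.2.2
  rw [hsplit, abs_div, abs_two, div_le_iff₀ two_pos]
  norm_num at hp hm
  linarith [abs_sub _ _ |>.trans (add_le_add hp hm)]

variable {ℓ : ℝ → Bool → ℝ} (hW01 : ∀ z, W z ∈ Icc (0 : ℝ) 1)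
  (hℓ : ∀ q ∈ Icc (0 : ℝ) 1, ∀ y, ℓ q y ∈ Icc (-1 : ℝ) 1)
include hW01 hℓ

lemma abs_integral_mul_lossDiff_comp_le (hℓmeas : ∀ y, Measurable fun q => ℓ q y)
    (hℓBV : ∀ y, eVariationOn (fun q => ℓ q y) (Icc 0 1) ≤ 1) :
    |∫ z, r z * lossDiff ℓ (W z) ∂μ| ≤ 10 * c := by
  have hint (y : Bool) : Integrable (fun z => r z * ℓ (W z) y) μ :=
    hr.mul_bdd (c := 1) ((hℓmeas y).comp hW).aestronglyMeasurable <|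
      ae_of_all _ fun z => abs_le.mpr (hℓ _ (hW01 z) y)
  have hbound (y : Bool) : |∫ z, r z * ℓ (W z) y ∂μ| ≤ 5 * c :=
    abs_integral_mul_comp_le_of_eVariationOn_le hW hr hc (hℓBV y)
      (fun q hq => abs_le.mpr (hℓ q hq y)) hW01
  simp only [lossDiff, mul_sub]
  rw [integral_sub (hint true) (hint false)]
  linarith [abs_sub _ _ |>.trans (add_le_add (hbound true) (hbound false))]

lemma abs_integral_mul_lossDiff_comp_postprocess_le {κ : ℝ → ℝ}
    (hκ : ∀ q ∈ Icc (0 : ℝ) 1, κ q ∈ Icc (0 : ℝ) 1)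
    (hκopt : ∀ q ∈ Icc (0 : ℝ) 1, ∀ a ∈ Icc (0 : ℝ) 1,
      expectedLoss ℓ q (κ q) ≤ expectedLoss ℓ q a) :
    |∫ z, r z * lossDiff ℓ (κ (W z)) ∂μ| ≤ 6 * c := by
  have hanti : AntitoneOn (fun q => lossDiff ℓ (κ q)) (Icc 0 1) := fun q hq q' hq' hqq' => by
    rcases hqq'.eq_or_lt with rfl | hlt
    · exact le_rfl
    exact lossDiff_le_of_expectedLoss_le hlt (hκopt q hq _ (hκ q' hq')) (hκopt q' hq' _ (hκ q hq))
  have hbounds : ∀ q ∈ Icc (0 : ℝ) 1, -2 ≤ lossDiff ℓ (κ q) ∧ lossDiff ℓ (κ q) ≤ 2 := by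
    intro q hq
    have h1 := hℓ _ (hκ q hq) true
    have h0 := hℓ _ (hκ q hq) false
    constructor <;> simp only [lossDiff] <;> linarith [h1.1, h1.2, h0.1, h0.2]
  set σ := IccExtend zero_le_one fun q : Icc (0 : ℝ) 1 => lossDiff ℓ (κ q)
  have hσ : ∀ q, -2 ≤ σ q ∧ σ q ≤ 2 := fun q => by
    simp only [σ]
    rw [IccExtend_apply]
    exact hbounds _ (projIcc 0 1 zero_le_one q).2
  have := abs_integral_mul_comp_le_of_antitone hW hr hc (hanti.antitone_IccExtend zero_le_one)
    (fun q => (hσ q).1) fun q => (hσ q).2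
  norm_num at this
  convert this using 4 with z
  rw [IccExtend_of_mem _ _ (hW01 z)]

end ThresholdTests

theorem integral_loss_postprocess_le_of_stepCalibrated {X : Type*} [MeasurableSpace X]
    {μ : Measure (X × Bool)} [IsFiniteMeasure μ] {ℓ : ℝ → Bool → ℝ} {κ : ℝ → ℝ} {p h : X → ℝ}
    {c : ℝ} (hℓmeas : ∀ y, Measurable fun q => ℓ q y)
    (hℓ : ∀ q ∈ Icc (0 : ℝ) 1, ∀ y, ℓ q y ∈ Icc (-1 : ℝ) 1)
    (hℓBV : ∀ y, eVariationOn (fun q => ℓ q y) (Icc 0 1) ≤ 1) (hκmeas : Measurable κ)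
    (hκ : ∀ q ∈ Icc (0 : ℝ) 1, κ q ∈ Icc (0 : ℝ) 1)
    (hκopt : ∀ q ∈ Icc (0 : ℝ) 1, ∀ a ∈ Icc (0 : ℝ) 1,
      expectedLoss ℓ q (κ q) ≤ expectedLoss ℓ q a)
    (hp : Measurable p) (hp01 : ∀ x, p x ∈ Icc (0 : ℝ) 1)
    (hh : Measurable h) (hh01 : ∀ x, h x ∈ Icc (0 : ℝ) 1)
    (hcal : ∀ v ∈ Icc (0 : ℝ) 1, ∀ w ∈ Icc (0 : ℝ) 1,
      |∫ z, (lab z.2 - p z.1) * (if p z.1 ≤ v then 1 else 0) * (if h z.1 ≤ w then 1 else 0) ∂μ|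
        ≤ c) :
    ∫ z, ℓ (κ (p z.1)) z.2 ∂μ ≤ ∫ z, ℓ (h z.1) z.2 ∂μ + 16 * c := by
  set r : X × Bool → ℝ := fun z => lab z.2 - p z.1
  have hr : Integrable r μ :=
    .of_bound (((measurable_of_finite lab).comp measurable_snd).sub
      (hp.comp measurable_fst)).aestronglyMeasurable 1
      (ae_of_all _ fun z => abs_lab_sub_le_one (hp01 z.1) z.2)
  have hcal_p (v : ℝ) : |∫ z in (fun z => p z.1) ⁻¹' Iic v, r z ∂μ| ≤ c := by
    refine abs_setIntegral_preimage_Iic_le_of_abs_integral_mul_ite_le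
      (W := fun z : X × Bool => p z.1) (hp.comp measurable_fst) (fun z => hp01 z.1)
      (fun v hv => ?_) v
    simpa only [r, fun x => (hh01 x).2, if_true, mul_one] using hcal v hv 1 ⟨zero_le_one, le_rfl⟩
  have hcal_h (w : ℝ) : |∫ z in (fun z => h z.1) ⁻¹' Iic w, r z ∂μ| ≤ c := by
    refine abs_setIntegral_preimage_Iic_le_of_abs_integral_mul_ite_le
      (W := fun z : X × Bool => h z.1) (hh.comp measurable_fst) (fun z => hh01 z.1)
      (fun w hw => ?_) w
    simpa only [r, fun x => (hp01 x).2, if_true, mul_one] using hcal 1 ⟨zero_le_one, le_rfl⟩ w hw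
  have hloss_int {a : X → ℝ} (ha : Measurable a) (ha01 : ∀ x, a x ∈ Icc (0 : ℝ) 1) :
      Integrable (fun z => ℓ (a z.1) z.2) μ :=
    .of_bound (measurable_from_prod_countable_left fun y => (hℓmeas y).comp ha).aestronglyMeasurable
      1 (ae_of_all _ fun z => abs_le.mpr (hℓ _ (ha01 _) _))
  have hgap_int {a : X → ℝ} (ha : Measurable a) (ha01 : ∀ x, a x ∈ Icc (0 : ℝ) 1) :
      Integrable (fun z => r z * lossDiff ℓ (a z.1)) μ :=
    hr.mul_bdd (c := 2) ((((hℓmeas true).sub (hℓmeas false)).comp ha).comp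
      measurable_fst).aestronglyMeasurable <| ae_of_all _ fun z => by
        have h1 := hℓ _ (ha01 z.1) true
        have h0 := hℓ _ (ha01 z.1) false
        rw [Real.norm_eq_abs, abs_le, lossDiff]
        constructor <;> linarith [h1.1, h1.2, h0.1, h0.2]
  have hκp : Measurable fun x => κ (p x) := hκmeas.comp hp
  have hκp01 : ∀ x, κ (p x) ∈ Icc (0 : ℝ) 1 := fun x => hκ _ (hp01 x)
  have hslope : |∫ z, r z * lossDiff ℓ (κ (p z.1)) ∂μ| ≤ 6 * c :=
    abs_integral_mul_lossDiff_comp_postprocess_le (hp.comp measurable_fst) hr hcal_p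
      (fun z => hp01 z.1) hℓ hκ hκopt
  have hgap : |∫ z, r z * lossDiff ℓ (h z.1) ∂μ| ≤ 10 * c :=
    abs_integral_mul_lossDiff_comp_le (hh.comp measurable_fst) hr hcal_h (fun z => hh01 z.1) hℓ
      hℓmeas hℓBV
  have hregret := integral_le_add_sub_of_sub_le_sub (hloss_int hκp hκp01) (hloss_int hh hh01)
    (hgap_int hκp hκp01) (hgap_int hh hh01)
    fun z => loss_sub_le_of_expectedLoss_le (hκopt _ (hp01 _) _ (hh01 _)) z.2
  linarith [le_abs_self (∫ z, r z * lossDiff ℓ (κ (p z.1)) ∂μ),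
    neg_abs_le (∫ z, r z * lossDiff ℓ (h z.1) ∂μ)]

theorem stmt0_general {X : Type*} [MeasurableSpace X]
    (D : Measure (X × Bool))
    (ε : ℝ) (hε : 0 < ε)
    -- the loss class L ⊆ L_BV
    (L : Set (ℝ → Bool → ℝ))
    (hLmeas : ∀ ℓ ∈ L, ∀ y : Bool, Measurable (fun q => ℓ q y))
    (hLbdd : ∀ ℓ ∈ L, ∀ q ∈ Icc (0:ℝ) 1, ∀ y : Bool, ℓ q y ∈ Icc (-1:ℝ) 1)
    (hLBV : ∀ ℓ ∈ L, ∀ y : Bool, ∀ S ∈ partitionSums (fun q => ℓ q y), S ≤ 1)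
    -- the groups G, each of positive probability
    (G : Set (X → Bool))
    -- the nonempty hypothesis class H
    (H : Set (X → ℝ)) (hHne : H.Nonempty)
    (hHmeas : ∀ h ∈ H, Measurable h)
    (hHrange : ∀ h ∈ H, ∀ x, h x ∈ Icc (0:ℝ) 1)
    -- post-processings k ℓ for each loss ℓ ∈ L
    (k : (ℝ → Bool → ℝ) → ℝ → ℝ)
    (hkmeas : ∀ ℓ ∈ L, Measurable (k ℓ))
    (hkrange : ∀ ℓ ∈ L, ∀ q ∈ Icc (0:ℝ) 1, k ℓ q ∈ Icc (0:ℝ) 1)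
    (hkopt : ∀ ℓ ∈ L, ∀ q ∈ Icc (0:ℝ) 1, ∀ yhat ∈ Icc (0:ℝ) 1,
      q * ℓ (k ℓ q) true + (1 - q) * ℓ (k ℓ q) false ≤ q * ℓ yhat true + (1 - q) * ℓ yhat false)
    -- the predictor p⋆
    (p : X → ℝ) (hpmeas : Measurable p) (hprange : ∀ x, p x ∈ Icc (0:ℝ) 1)
    -- (G, H, ε)-step calibration
    (hcal : ∀ v ∈ Icc (0:ℝ) 1, ∀ w ∈ Icc (0:ℝ) 1, ∀ h ∈ H, ∀ g ∈ G,
      |condE D g (fun z => (lab z.2 - p z.1) * (if p z.1 ≤ v then 1 else 0) *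
        (if h z.1 ≤ w then 1 else 0))| ≤ ε * Real.sqrt (1 / Pg D g)) :
    -- conclusion: (L, G, H, 20 ε)-panprediction
    ∀ ℓ ∈ L, ∀ g ∈ G,
      condE D g (fun z => ℓ (k ℓ (p z.1)) z.2) ≤
        sInf ((fun h => condE D g (fun z => ℓ (h z.1) z.2)) '' H) +
          20 * ε * Real.sqrt (1 / Pg D g) := by
  intro ℓ hℓ g hg
  have hc : 0 ≤ ε * Real.sqrt (1 / Pg D g) := mul_nonneg hε.le (Real.sqrt_nonneg _)
  have hℓBV (y : Bool) : eVariationOn (fun q => ℓ q y) (Icc 0 1) ≤ 1 :=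
    ENNReal.ofReal_one ▸ eVariationOn_Icc_le_of_partitionSums_le (hLBV ℓ hℓ y)
  have hregret : ∀ h ∈ H, condE D g (fun z => ℓ (k ℓ (p z.1)) z.2) ≤
      condE D g (fun z => ℓ (h z.1) z.2) + 16 * (ε * Real.sqrt (1 / Pg D g)) := fun h hh =>
    integral_loss_postprocess_le_of_stepCalibrated (hLmeas ℓ hℓ) (hLbdd ℓ hℓ) hℓBV (hkmeas ℓ hℓ)
      (hkrange ℓ hℓ) (hkopt ℓ hℓ) hpmeas hprange (hHmeas h hh) (hHrange h hh)
      fun v hv w hw => hcal v hv w hw h hh g hg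
  have hinf : condE D g (fun z => ℓ (k ℓ (p z.1)) z.2) - 16 * (ε * Real.sqrt (1 / Pg D g)) ≤
      sInf ((fun h => condE D g (fun z => ℓ (h z.1) z.2)) '' H) := by
    refine le_csInf (hHne.image _) ?_
    rintro _ ⟨h, hh, rfl⟩
    exact sub_le_iff_le_add.mpr (hregret h hh)
  linarith

/-- If `p⋆` is `(G, H, ε)`-step calibrated, then `p⋆` is an
`(L, G, H, 20ε)`-panpredictor. -/
theorem stmt0 {X : Type*} [MeasurableSpace X]
    (D : Measure (X × Bool)) [IsProbabilityMeasure D]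
    (ε : ℝ) (hε : 0 < ε)
    -- the loss class L ⊆ L_BV
    (L : Set (ℝ → Bool → ℝ))
    (hLmeas : ∀ ℓ ∈ L, ∀ y : Bool, Measurable (fun q => ℓ q y))
    (hLbdd : ∀ ℓ ∈ L, ∀ q ∈ Icc (0:ℝ) 1, ∀ y : Bool, ℓ q y ∈ Icc (-1:ℝ) 1)
    (hLBV : ∀ ℓ ∈ L, ∀ y : Bool, ∀ S ∈ partitionSums (fun q => ℓ q y), S ≤ 1)
    -- the groups G, each of positive probability
    (G : Set (X → Bool)) (hGmeas : ∀ g ∈ G, Measurable g)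
    (hGpos : ∀ g ∈ G, 0 < Pg D g)
    -- the nonempty hypothesis class H
    (H : Set (X → ℝ)) (hHne : H.Nonempty)
    (hHmeas : ∀ h ∈ H, Measurable h)
    (hHrange : ∀ h ∈ H, ∀ x, h x ∈ Icc (0:ℝ) 1)
    -- post-processings k ℓ for each loss ℓ ∈ L
    (k : (ℝ → Bool → ℝ) → ℝ → ℝ)
    (hkmeas : ∀ ℓ ∈ L, Measurable (k ℓ))
    (hkrange : ∀ ℓ ∈ L, ∀ q ∈ Icc (0:ℝ) 1, k ℓ q ∈ Icc (0:ℝ) 1)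
    (hkopt : ∀ ℓ ∈ L, ∀ q ∈ Icc (0:ℝ) 1, ∀ yhat ∈ Icc (0:ℝ) 1,
      q * ℓ (k ℓ q) true + (1 - q) * ℓ (k ℓ q) false ≤ q * ℓ yhat true + (1 - q) * ℓ yhat false)
    -- the predictor p⋆
    (p : X → ℝ) (hpmeas : Measurable p) (hprange : ∀ x, p x ∈ Icc (0:ℝ) 1)
    -- (G, H, ε)-step calibration
    (hcal : ∀ v ∈ Icc (0:ℝ) 1, ∀ w ∈ Icc (0:ℝ) 1, ∀ h ∈ H, ∀ g ∈ G,
      |condE D g (fun z => (lab z.2 - p z.1) * (if p z.1 ≤ v then 1 else 0) *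
        (if h z.1 ≤ w then 1 else 0))| ≤ ε * Real.sqrt (1 / Pg D g)) :
    -- conclusion: (L, G, H, 20 ε)-panprediction
    ∀ ℓ ∈ L, ∀ g ∈ G,
      condE D g (fun z => ℓ (k ℓ (p z.1)) z.2) ≤
        sInf ((fun h => condE D g (fun z => ℓ (h z.1) z.2)) '' H) +
          20 * ε * Real.sqrt (1 / Pg D g) :=
  stmt0_general D ε hε L hLmeas hLbdd hLBV G H hHne hHmeas hHrange k hkmeas hkrange hkopt p hpmeas
    hprange hcal

end
end

section
/- Let ℓ: [0,1] × {0,1} → [−1,1] be any loss with Borel measurable sections ℓ(·,y) and let k_ℓ be a post-processing for ℓ. If a predictor p*: X → [0,1] is (G,∅,ε)-step calibrated, then for every group g ∈ G: |E_{(x,y)~D}[(y − p*(x))·Δℓ(k_ℓ(p*(x))) | g(x)=1]| ≤ 10ε·√(1/P_g) (Decision Outcome Indistinguishability). -/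
open MeasureTheory ProbabilityTheory Set

noncomputable section

lemma count_sum (N c : ℕ) :
    ∑ j ∈ Finset.range N, (if j < c then (1:ℝ) else 0) = (min c N : ℕ) := by
  induction N with
  | zero => simp
  | succ n ih =>
    rw [Finset.sum_range_succ, ih]
    by_cases h : n < c
    · rw [if_pos h]
      have : min c (n+1) = min c n + 1 := by omega
      rw [this]; push_cast; ring
    · rw [if_neg h]
      have : min c (n+1) = min c n := by omega
      rw [this]; ring

lemma layer_approx (b : ℝ) (hb : b ∈ Icc (-2:ℝ) 2) (N : ℕ) (hN : 1 ≤ N) :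
    |(-2 + (4 / N) * ∑ j ∈ Finset.range N,
        (if (-2 + 4 * j / N : ℝ) < b then (1:ℝ) else 0)) - b| ≤ 4 / N := by
  have hNpos : (0:ℝ) < N := by exact_mod_cast hN
  obtain ⟨a, ha⟩ : ∃ a : ℝ, a = b + 2 := ⟨b + 2, rfl⟩
  have ha0 : 0 ≤ a := by rw [ha]; linarith [hb.1]
  have ha4 : a ≤ 4 := by rw [ha]; linarith [hb.2]
  obtain ⟨c, hc⟩ : ∃ c : ℕ, c = ⌈(N:ℝ) * a / 4⌉₊ := ⟨_, rfl⟩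
  have hkey : ∀ j : ℕ, ((-2 + 4 * j / N : ℝ) < b) ↔ j < c := by
    intro j
    rw [hc, Nat.lt_ceil]
    constructor
    · intro h
      rw [lt_div_iff₀ (by norm_num : (0:ℝ) < 4)]
      have h' : 4 * (j:ℝ) / N < a := by rw [ha]; linarith
      rw [div_lt_iff₀ hNpos] at h'
      linarith
    · intro h
      rw [lt_div_iff₀ (by norm_num : (0:ℝ) < 4)] at h
      have h' : 4 * (j:ℝ) / N < a := by rw [div_lt_iff₀ hNpos]; linarith
      rw [ha] at h'; linarith
  have hsum : ∑ j ∈ Finset.range N, (if (-2 + 4 * j / N : ℝ) < b then (1:ℝ) else 0)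
      = (min c N : ℕ) := by
    rw [← count_sum N c]
    exact Finset.sum_congr rfl fun j _ => by rw [if_congr (hkey j) rfl rfl]
  have hcN : c ≤ N := by
    rw [hc]; apply Nat.ceil_le.2; rw [div_le_iff₀ (by norm_num : (0:ℝ) < 4)]; nlinarith
  have h1 : (N:ℝ) * a / 4 ≤ c := by rw [hc]; exact Nat.le_ceil _
  have h2 : (c:ℝ) < N * a / 4 + 1 := by rw [hc]; exact Nat.ceil_lt_add_one (by positivity)
  rw [hsum, min_eq_left hcN]
  have h1' : (N:ℝ) * a ≤ 4 * c := by linarith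
  have h2' : 4 * (c:ℝ) < N * a + 4 := by linarith
  have e : -2 + 4 / N * c - b = (4 * c - N * a) / N := by rw [ha]; field_simp; ring
  rw [e, abs_le]
  constructor
  · have : (0:ℝ) ≤ (4 * c - N * a) / N := div_nonneg (by linarith) hNpos.le
    have h4 : (0:ℝ) ≤ 4 / N := by positivity
    linarith
  · exact (div_le_div_iff_of_pos_right hNpos).2 (by linarith)

/-- **Decision OI.** If `p⋆` is `(G, ∅, ε)`-step calibrated, then for every
group `g ∈ G`, `|E[(y - p⋆(x))·Δℓ(k_ℓ(p⋆(x))) | g(x)=1]| ≤ 10ε·√(1/P_g)`. -/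
theorem stmt3 {X : Type*} [MeasurableSpace X]
    (D : Measure (X × Bool)) [IsProbabilityMeasure D]
    (ε : ℝ) (hε : 0 < ε)
    -- an arbitrary loss with Borel measurable sections, bounded in [-1,1]
    (ℓ : ℝ → Bool → ℝ)
    (hLmeas : ∀ y : Bool, Measurable (fun q => ℓ q y))
    (hLbdd : ∀ q ∈ Icc (0:ℝ) 1, ∀ y : Bool, ℓ q y ∈ Icc (-1:ℝ) 1)
    -- a post-processing for ℓ
    (k : ℝ → ℝ) (hkmeas : Measurable k)
    (hkrange : ∀ q ∈ Icc (0:ℝ) 1, k q ∈ Icc (0:ℝ) 1)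
    (hkopt : ∀ q ∈ Icc (0:ℝ) 1, ∀ yhat ∈ Icc (0:ℝ) 1,
      q * ℓ (k q) true + (1 - q) * ℓ (k q) false ≤ q * ℓ yhat true + (1 - q) * ℓ yhat false)
    (G : Set (X → Bool)) (hGmeas : ∀ g ∈ G, Measurable g)
    (hGpos : ∀ g ∈ G, 0 < Pg D g)
    (p : X → ℝ) (hpmeas : Measurable p) (hprange : ∀ x, p x ∈ Icc (0:ℝ) 1)
    -- (G, ∅, ε)-step calibration
    (hcal : ∀ v ∈ Icc (0:ℝ) 1, ∀ g ∈ G,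
      |condE D g (fun z => (lab z.2 - p z.1) * (if p z.1 ≤ v then 1 else 0))| ≤
        ε * Real.sqrt (1 / Pg D g)) :
    ∀ g ∈ G,
      |condE D g (fun z => (lab z.2 - p z.1) *
          (ℓ (k (p z.1)) true - ℓ (k (p z.1)) false))| ≤
        10 * ε * Real.sqrt (1 / Pg D g) := by
  intro g hg
  have hDS : D {z : X × Bool | g z.1 = true} ≠ 0 := by
    intro h0
    have hpos := hGpos g hg
    rw [Pg, h0] at hpos
    simp at hpos
  haveI : IsProbabilityMeasure (D[|{z : X × Bool | g z.1 = true}]) :=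
    cond_isProbabilityMeasure hDS
  set μ : Measure (X × Bool) := D[|{z : X × Bool | g z.1 = true}] with hμ
  set B : ℝ := ε * Real.sqrt (1 / Pg D g) with hB
  have hB0 : 0 ≤ B := by positivity
  set qf : X × Bool → ℝ := fun z => lab z.2 - p z.1 with hqf
  have hqfm : Measurable qf :=
    ((measurable_of_countable lab).comp measurable_snd).sub (hpmeas.comp measurable_fst)
  have hqfb : ∀ z, |qf z| ≤ 1 := by
    intro z
    have h1 := (hprange z.1).1
    have h2 := (hprange z.1).2
    rw [abs_le]
    cases hz : z.2 <;> simp [hqf, lab, hz] <;> constructor <;> linarith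
  set h : ℝ → ℝ := fun q => ℓ (k q) true - ℓ (k q) false with hh
  have hhm : Measurable h := ((hLmeas true).comp hkmeas).sub ((hLmeas false).comp hkmeas)
  have hhb : ∀ q ∈ Icc (0:ℝ) 1, |h q| ≤ 2 := by
    intro q hq
    have h1 := hLbdd (k q) (hkrange q hq) true
    have h2 := hLbdd (k q) (hkrange q hq) false
    rw [abs_le]
    constructor <;> simp [hh] <;> linarith [h1.1, h1.2, h2.1, h2.2]
  have hmono : ∀ q1 ∈ Icc (0:ℝ) 1, ∀ q2 ∈ Icc (0:ℝ) 1, q1 ≤ q2 → h q2 ≤ h q1 := by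
    intro q1 hq1 q2 hq2 hle
    rcases eq_or_lt_of_le hle with rfl | hlt
    · exact le_refl _
    have e1 := hkopt q1 hq1 (k q2) (hkrange q2 hq2)
    have e2 := hkopt q2 hq2 (k q1) (hkrange q1 hq1)
    simp only [hh]
    nlinarith [e1, e2, hlt]
  have hint : ∀ (f : X × Bool → ℝ) (C : ℝ), Measurable f → (∀ z, |f z| ≤ C) →
      Integrable f μ := by
    intro f C hf hb
    exact (integrable_const C).mono' hf.aestronglyMeasurable
      (ae_of_all _ fun z => by rw [Real.norm_eq_abs]; exact hb z)
  have hindm : ∀ v : ℝ, Measurable (fun z : X × Bool => if p z.1 ≤ v then (1:ℝ) else 0) :=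
    fun v => Measurable.ite (measurableSet_le (hpmeas.comp measurable_fst) measurable_const)
      measurable_const measurable_const
  have hprodb : ∀ (i : X × Bool → ℝ), (∀ z, i z = 0 ∨ i z = 1) → ∀ z, |qf z * i z| ≤ 1 := by
    intro i hi z
    rcases hi z with h0 | h0
    · simp [h0]
    · simpa [abs_mul, h0] using hqfb z
  -- step 1: calibration with closed thresholds, for all real v
  have hB1 : ∀ v : ℝ, |∫ z, qf z * (if p z.1 ≤ v then 1 else 0) ∂μ| ≤ B := by
    intro v
    rcases lt_or_ge v 0 with hv | hv
    · have hz : ∀ z : X × Bool, qf z * (if p z.1 ≤ v then (1:ℝ) else 0) = 0 := by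
        intro z
        rw [if_neg (by linarith [(hprange z.1).1]), mul_zero]
      rw [show (fun z : X × Bool => qf z * (if p z.1 ≤ v then (1:ℝ) else 0)) = fun _ => (0:ℝ)
        from funext hz]
      simpa using hB0
    rcases le_or_gt v 1 with hv1 | hv1
    · exact hcal v ⟨hv, hv1⟩ g hg
    · rw [show (fun z : X × Bool => qf z * (if p z.1 ≤ v then (1:ℝ) else 0))
          = fun z => qf z * (if p z.1 ≤ 1 then (1:ℝ) else 0) from funext fun z => by
        rw [if_pos ((hprange z.1).2.trans hv1.le), if_pos (hprange z.1).2]]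
      exact hcal 1 ⟨zero_le_one, le_refl 1⟩ g hg
  -- step 2: calibration with open thresholds
  have hB2 : ∀ v : ℝ, |∫ z, qf z * (if p z.1 < v then 1 else 0) ∂μ| ≤ B := by
    intro v
    set F : ℕ → X × Bool → ℝ :=
      fun n z => qf z * (if p z.1 ≤ v - 1/((n:ℝ)+1) then 1 else 0) with hF
    have hFmeas : ∀ n, AEStronglyMeasurable (F n) μ :=
      fun n => (hqfm.mul (hindm _)).aestronglyMeasurable
    have hFb : ∀ n, ∀ᵐ z ∂μ, ‖F n z‖ ≤ (fun _ : X × Bool => (1:ℝ)) z := by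
      intro n
      refine ae_of_all _ fun z => ?_
      rw [Real.norm_eq_abs]
      exact hprodb (fun z => if p z.1 ≤ v - 1/((n:ℝ)+1) then (1:ℝ) else 0)
        (fun z => by
          by_cases hq : p z.1 ≤ v - 1/((n:ℝ)+1)
          · exact Or.inr (if_pos hq)
          · exact Or.inl (if_neg hq)) z
    have hlim : ∀ᵐ z ∂μ, Filter.Tendsto (fun n => F n z) Filter.atTop
        (nhds (qf z * (if p z.1 < v then 1 else 0))) := by
      refine ae_of_all _ fun z => ?_
      have hev : ∀ᶠ n in Filter.atTop, F n z = qf z * (if p z.1 < v then 1 else 0) := by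
        by_cases hc : p z.1 < v
        · obtain ⟨n0, hn0⟩ := exists_nat_gt (1 / (v - p z.1))
          refine Filter.eventually_atTop.2 ⟨n0, fun n hn => ?_⟩
          have hvp : 0 < v - p z.1 := by linarith
          have hnn : (n0:ℝ) ≤ n := by exact_mod_cast hn
          have h3 : 1 / (v - p z.1) < (n:ℝ) + 1 := by linarith
          have h4 : 1 / ((n:ℝ) + 1) < v - p z.1 := by
            rw [div_lt_iff₀ (by positivity : (0:ℝ) < (n:ℝ)+1)]
            rw [div_lt_iff₀ hvp] at h3
            nlinarith
          simp only [hF]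
          rw [if_pos hc, if_pos (by linarith)]
        · refine Filter.Eventually.of_forall fun n => ?_
          push_neg at hc
          have hneg : ¬ p z.1 ≤ v - 1/((n:ℝ)+1) := by
            intro hle
            have : (0:ℝ) < 1/((n:ℝ)+1) := by positivity
            linarith
          simp only [hF]
          rw [if_neg hneg, if_neg hc.not_gt]
      exact Filter.Tendsto.congr' (hev.mono fun n hn => hn.symm) tendsto_const_nhds
    have hT := tendsto_integral_of_dominated_convergence (μ := μ)
      (fun _ : X × Bool => (1:ℝ)) hFmeas (integrable_const 1) hFb hlim
    exact le_of_tendsto hT.abs (Filter.Eventually.of_forall fun n => hB1 (v - 1/((n:ℝ)+1)))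
  -- step 3: every superlevel set of h gives a calibrated indicator
  have hlayer : ∀ t : ℝ, |∫ z, qf z * (if t < h (p z.1) then 1 else 0) ∂μ| ≤ B := by
    intro t
    by_cases hA : ∃ q, q ∈ Icc (0:ℝ) 1 ∧ t < h q
    · have hAne : {q : ℝ | q ∈ Icc (0:ℝ) 1 ∧ t < h q}.Nonempty := hA
      have hbdd : BddAbove {q : ℝ | q ∈ Icc (0:ℝ) 1 ∧ t < h q} := ⟨1, fun q hq => hq.1.2⟩
      set s := sSup {q : ℝ | q ∈ Icc (0:ℝ) 1 ∧ t < h q} with hsdef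
      have hsmem : s ∈ Icc (0:ℝ) 1 := by
        obtain ⟨a0, ha0⟩ := hA
        exact ⟨ha0.1.1.trans (le_csSup hbdd ha0), csSup_le hAne fun q hq => hq.1.2⟩
      by_cases hsA : t < h s
      · have hz : (fun z : X × Bool => qf z * (if t < h (p z.1) then (1:ℝ) else 0))
            = fun z => qf z * (if p z.1 ≤ s then (1:ℝ) else 0) := by
          funext z
          by_cases hc : p z.1 ≤ s
          · rw [if_pos hc,
              if_pos (lt_of_lt_of_le hsA (hmono (p z.1) (hprange z.1) s hsmem hc))]
          · rw [if_neg hc, if_neg fun ht => hc (le_csSup hbdd ⟨hprange z.1, ht⟩)]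
        rw [hz]
        exact hB1 s
      · have hz : (fun z : X × Bool => qf z * (if t < h (p z.1) then (1:ℝ) else 0))
            = fun z => qf z * (if p z.1 < s then (1:ℝ) else 0) := by
          funext z
          by_cases hc : p z.1 < s
          · obtain ⟨a0, ha0, hlt⟩ := exists_lt_of_lt_csSup hAne hc
            rw [if_pos hc,
              if_pos (lt_of_lt_of_le ha0.2 (hmono (p z.1) (hprange z.1) a0 ha0.1 hlt.le))]
          · rw [if_neg hc, if_neg]
            intro ht
            have he : p z.1 = s := le_antisymm (le_csSup hbdd ⟨hprange z.1, ht⟩) (not_lt.1 hc)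
            rw [he] at ht
            exact hsA ht
        rw [hz]
        exact hB2 s
    · push_neg at hA
      have hz : (fun z : X × Bool => qf z * (if t < h (p z.1) then (1:ℝ) else 0))
          = fun _ => (0:ℝ) := by
        funext z
        rw [if_neg (hA (p z.1) (hprange z.1)).not_gt, mul_zero]
      rw [hz]
      simpa using hB0
  -- step 4: bound the full expectation, for each discretization level N
  have hqint : |∫ z, qf z ∂μ| ≤ B := by
    have hz : (fun z : X × Bool => qf z)
        = fun z => qf z * (if p z.1 ≤ (1:ℝ) then 1 else 0) := by
      funext z
      rw [if_pos (hprange z.1).2, mul_one]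
    rw [hz]
    exact hB1 1
  have hind2m : ∀ t : ℝ, Measurable (fun z : X × Bool => if t < h (p z.1) then (1:ℝ) else 0) :=
    fun t => Measurable.ite
      (measurableSet_lt measurable_const (hhm.comp (hpmeas.comp measurable_fst)))
      measurable_const measurable_const
  have hintlayer : ∀ t : ℝ,
      Integrable (fun z => qf z * (if t < h (p z.1) then (1:ℝ) else 0)) μ := fun t =>
    hint _ 1 (hqfm.mul (hind2m t)) (hprodb _ (fun z => by
      by_cases hq : t < h (p z.1)
      · exact Or.inr (if_pos hq)
      · exact Or.inl (if_neg hq)))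
  have hintqf : Integrable qf μ := hint _ 1 hqfm hqfb
  have hmain : ∀ N : ℕ, 1 ≤ N → |∫ z, qf z * h (p z.1) ∂μ| ≤ 6 * B + 4 / N := by
    intro N hN1
    have hNpos : (0:ℝ) < N := by exact_mod_cast hN1
    have hNne : (N:ℝ) ≠ 0 := hNpos.ne'
    set hNf : ℝ → ℝ := fun q => -2 + (4 / N) * ∑ j ∈ Finset.range N,
      (if (-2 + 4 * j / N : ℝ) < h q then (1:ℝ) else 0) with hhNf
    have happrox : ∀ q ∈ Icc (0:ℝ) 1, |hNf q - h q| ≤ 4 / N := by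
      intro q hq
      have hb2 := abs_le.1 (hhb q hq)
      exact layer_approx (h q) ⟨hb2.1, hb2.2⟩ N hN1
    have hSm : Measurable (fun q : ℝ => ∑ j ∈ Finset.range N,
        (if (-2 + 4 * j / N : ℝ) < h q then (1:ℝ) else 0)) :=
      Finset.measurable_sum _ (fun j _ => Measurable.ite
        (measurableSet_lt measurable_const hhm) measurable_const measurable_const)
    have hNfm : Measurable hNf := (hSm.const_mul (4/N)).const_add (-2)
    have hinthN : Integrable (fun z => qf z * hNf (p z.1)) μ := by
      refine hint _ 6 (hqfm.mul (hNfm.comp (hpmeas.comp measurable_fst))) fun z => ?_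
      have h1 := happrox (p z.1) (hprange z.1)
      have h2 := hhb (p z.1) (hprange z.1)
      have h3 := hqfb z
      have hN1' : (1:ℝ) ≤ N := by exact_mod_cast hN1
      have h4 : 4 / (N:ℝ) ≤ 4 := by
        rw [div_le_iff₀ hNpos]
        nlinarith
      have h5 : |hNf (p z.1)| ≤ |hNf (p z.1) - h (p z.1)| + |h (p z.1)| := by
        simpa using abs_add_le (hNf (p z.1) - h (p z.1)) (h (p z.1))
      have h6 : |hNf (p z.1)| ≤ 6 := by linarith
      rw [abs_mul]
      calc |qf z| * |hNf (p z.1)| ≤ 1 * 6 :=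
            mul_le_mul h3 h6 (abs_nonneg _) zero_le_one
        _ = 6 := one_mul 6
    have herrb : ∀ z : X × Bool, |qf z * (h (p z.1) - hNf (p z.1))| ≤ 4 / N := by
      intro z
      have h1 := happrox (p z.1) (hprange z.1)
      have h3 := hqfb z
      have h2 : |h (p z.1) - hNf (p z.1)| ≤ 4 / N := by rw [abs_sub_comm]; exact h1
      rw [abs_mul]
      calc |qf z| * |h (p z.1) - hNf (p z.1)| ≤ 1 * (4/N) :=
            mul_le_mul h3 h2 (abs_nonneg _) zero_le_one
        _ = 4 / N := one_mul _
    have hinterr : Integrable (fun z => qf z * (h (p z.1) - hNf (p z.1))) μ :=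
      hint _ (4/N) (hqfm.mul ((hhm.comp (hpmeas.comp measurable_fst)).sub
        (hNfm.comp (hpmeas.comp measurable_fst)))) herrb
    have hsplit : ∫ z, qf z * h (p z.1) ∂μ
        = ∫ z, qf z * hNf (p z.1) ∂μ + ∫ z, qf z * (h (p z.1) - hNf (p z.1)) ∂μ := by
      rw [← integral_add hinthN hinterr]
      exact integral_congr_ae (ae_of_all _ fun z => by ring)
    have hexp : ∀ z : X × Bool, qf z * hNf (p z.1) = (-2) * qf z
        + (4/N) * ∑ j ∈ Finset.range N,
          qf z * (if (-2 + 4 * j / N : ℝ) < h (p z.1) then (1:ℝ) else 0) := by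
      intro z
      simp only [hhNf]
      conv_rhs => rw [← Finset.mul_sum]
      ring
    have hdecomp : ∫ z, qf z * hNf (p z.1) ∂μ = (-2) * ∫ z, qf z ∂μ
        + (4/N) * ∑ j ∈ Finset.range N,
          ∫ z, qf z * (if (-2 + 4 * j / N : ℝ) < h (p z.1) then (1:ℝ) else 0) ∂μ := by
      rw [show (fun z => qf z * hNf (p z.1)) = fun z => (-2) * qf z
          + (4/N) * ∑ j ∈ Finset.range N,
            qf z * (if (-2 + 4 * j / N : ℝ) < h (p z.1) then (1:ℝ) else 0)
        from funext hexp]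
      rw [integral_add (hintqf.const_mul (-2))
        ((integrable_finset_sum _ (fun j _ => hintlayer _)).const_mul (4/N)),
        integral_const_mul, integral_const_mul,
        integral_finset_sum _ (fun j _ => hintlayer _)]
    have hsum_bound : |∑ j ∈ Finset.range N,
        ∫ z, qf z * (if (-2 + 4 * j / N : ℝ) < h (p z.1) then (1:ℝ) else 0) ∂μ| ≤ N * B := by
      calc |∑ j ∈ Finset.range N,
            ∫ z, qf z * (if (-2 + 4 * j / N : ℝ) < h (p z.1) then (1:ℝ) else 0) ∂μ|
          ≤ ∑ j ∈ Finset.range N,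
            |∫ z, qf z * (if (-2 + 4 * j / N : ℝ) < h (p z.1) then (1:ℝ) else 0) ∂μ| :=
            Finset.abs_sum_le_sum_abs _ _
        _ ≤ ∑ _j ∈ Finset.range N, B := Finset.sum_le_sum fun j _ => hlayer _
        _ = N * B := by rw [Finset.sum_const, Finset.card_range, nsmul_eq_mul]
    have herr_bound : |∫ z, qf z * (h (p z.1) - hNf (p z.1)) ∂μ| ≤ 4 / N := by
      calc |∫ z, qf z * (h (p z.1) - hNf (p z.1)) ∂μ|
          ≤ ∫ z, |qf z * (h (p z.1) - hNf (p z.1))| ∂μ := by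
            simpa only [Real.norm_eq_abs] using norm_integral_le_integral_norm (μ := μ)
              (fun z => qf z * (h (p z.1) - hNf (p z.1)))
        _ ≤ ∫ _z, (4/N : ℝ) ∂μ := integral_mono hinterr.abs (integrable_const _) herrb
        _ = 4 / N := by simp
    have hfirst : |∫ z, qf z * hNf (p z.1) ∂μ| ≤ 2 * B + (4/N) * (N * B) := by
      rw [hdecomp]
      have h4N : (0:ℝ) ≤ 4 / N := by positivity
      calc |(-2) * ∫ z, qf z ∂μ + (4/N) * ∑ j ∈ Finset.range N,
            ∫ z, qf z * (if (-2 + 4 * j / N : ℝ) < h (p z.1) then (1:ℝ) else 0) ∂μ|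
          ≤ |(-2) * ∫ z, qf z ∂μ| + |(4/N) * ∑ j ∈ Finset.range N,
            ∫ z, qf z * (if (-2 + 4 * j / N : ℝ) < h (p z.1) then (1:ℝ) else 0) ∂μ| :=
            abs_add_le _ _
        _ = 2 * |∫ z, qf z ∂μ| + (4/N) * |∑ j ∈ Finset.range N,
            ∫ z, qf z * (if (-2 + 4 * j / N : ℝ) < h (p z.1) then (1:ℝ) else 0) ∂μ| := by
            rw [abs_mul, abs_mul, abs_of_nonneg h4N]
            norm_num
        _ ≤ 2 * B + (4/N) * (N * B) := by
            have := mul_le_mul_of_nonneg_left hsum_bound h4N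
            linarith [hqint]
    have hfour : (4/(N:ℝ)) * (N * B) = 4 * B := by field_simp
    calc |∫ z, qf z * h (p z.1) ∂μ|
        = |∫ z, qf z * hNf (p z.1) ∂μ + ∫ z, qf z * (h (p z.1) - hNf (p z.1)) ∂μ| := by
          rw [hsplit]
      _ ≤ |∫ z, qf z * hNf (p z.1) ∂μ| + |∫ z, qf z * (h (p z.1) - hNf (p z.1)) ∂μ| :=
          abs_add_le _ _
      _ ≤ (2 * B + (4/N) * (N * B)) + 4 / N := add_le_add hfirst herr_bound
      _ = 6 * B + 4 / N := by rw [hfour]; ring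
  -- step 5: let N → ∞
  have hfin : |∫ z, qf z * h (p z.1) ∂μ| ≤ 6 * B := by
    refine le_of_forall_pos_le_add fun η hη => ?_
    obtain ⟨N, hN⟩ := exists_nat_gt (4 / η)
    have hN1 : 1 ≤ N := by
      by_contra hcon
      push_neg at hcon
      have hN0 : N = 0 := by omega
      rw [hN0] at hN
      have : (0:ℝ) < 4 / η := by positivity
      simp at hN
      linarith
    have h6 := hmain N hN1
    have hNpos : (0:ℝ) < N := by exact_mod_cast hN1
    have h7 : 4 / (N:ℝ) < η := by
      rw [div_lt_iff₀ hNpos]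
      rw [div_lt_iff₀ hη] at hN
      linarith
    linarith
  have h10 : 10 * ε * Real.sqrt (1 / Pg D g) = 10 * B := by rw [hB]; ring
  have hgoal : |∫ z, qf z * h (p z.1) ∂μ| ≤ 10 * ε * Real.sqrt (1 / Pg D g) := by
    rw [h10]
    linarith
  exact hgoal

end
end

section
/- Let ℓ: [0,1] × {0,1} → [−1,1] be a loss of bounded variation (ℓ ∈ L_BV). If a predictor p*: X → [0,1] is (G,H,ε)-multiaccurate, then for every h ∈ H and every group g ∈ G: |E_{(x,y)~D}[(y − p*(x))·Δℓ(h(x)) | g(x)=1]| ≤ 10ε·√(1/P_g) (Hypothesis Outcome Indistinguishability). -/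
/-!
Write `u = y - p⋆(x)`, `q = h(x)` and `c = ε √(1/P_g)`, so that multiaccuracy says
`|E[u · 1[q ≤ s]]| ≤ c` for every threshold `s`. Since `{q < s}` is the increasing union of the
sets `{q ≤ s - 1/(n+1)}`, the same bound holds for `E[u · 1[q ∈ L]]` whenever `L` is a lower set
of `ℝ`. For monotone `A`, the layer-cake formula `A(q) - A(0) = ∫_{A 0}^{A 1} 1[t ≤ A(q)] dt` and
Fubini write `E[u (A(q) - A(0))]` as an average of `E[u] - E[u · 1[A(q) < t]]`, hence it is at
most `2c (A 1 - A 0)`. A loss difference `Δℓ` of variation at most `2` is `P - N` with `P, N`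
monotone of total increase at most `2` (Jordan decomposition), which gives
`|E[u · Δℓ(q)]| ≤ (|Δℓ(0)| + 4) c ≤ 6c`.
-/

open MeasureTheory ProbabilityTheory Set

noncomputable section

open Filter

/-- `partitionSums f` is `partitionSumsUpTo f 1` by definition. -/
def partitionSumsUpTo (f : ℝ → ℝ) (c : ℝ) : Set ℝ :=
  {S | ∃ (m : ℕ) (z : ℕ → ℝ), z 0 = 0 ∧ z m = c ∧ (∀ i < m, z i < z (i + 1)) ∧
      S = ∑ i ∈ Finset.range m, |f (z (i + 1)) - f (z i)|}

def variationUpTo (f : ℝ → ℝ) (t : ℝ) : ℝ := sSup (partitionSumsUpTo f t)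

lemma partitionSums_sub_le {f g : ℝ → ℝ} {C₁ C₂ : ℝ} (hf : ∀ S ∈ partitionSums f, S ≤ C₁)
    (hg : ∀ S ∈ partitionSums g, S ≤ C₂) :
    ∀ S ∈ partitionSums (fun r => f r - g r), S ≤ C₁ + C₂ := by
  rintro _ ⟨m, z, h0, h1, hz, rfl⟩
  calc ∑ i ∈ Finset.range m, |f (z (i + 1)) - g (z (i + 1)) - (f (z i) - g (z i))|
      ≤ ∑ i ∈ Finset.range m, (|f (z (i + 1)) - f (z i)| + |g (z (i + 1)) - g (z i)|) :=
        Finset.sum_le_sum fun i _ => by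
          rw [sub_sub_sub_comm]; exact abs_sub _ _
    _ ≤ C₁ + C₂ := by
        rw [Finset.sum_add_distrib]
        exact add_le_add (hf _ ⟨m, z, h0, h1, hz, rfl⟩) (hg _ ⟨m, z, h0, h1, hz, rfl⟩)

lemma zero_mem_partitionSumsUpTo_zero (f : ℝ → ℝ) : (0 : ℝ) ∈ partitionSumsUpTo f 0 :=
  ⟨0, fun _ => 0, rfl, rfl, fun _ hi => absurd hi (Nat.not_lt_zero _), by simp⟩

lemma add_abs_sub_mem_partitionSumsUpTo {f : ℝ → ℝ} {a b S : ℝ}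
    (hS : S ∈ partitionSumsUpTo f a) (hab : a < b) :
    S + |f b - f a| ∈ partitionSumsUpTo f b := by
  obtain ⟨m, z, h0, hm, hz, rfl⟩ := hS
  refine ⟨m + 1, fun i => if i ≤ m then z i else b, by simp [h0], by simp, fun i hi => ?_, ?_⟩
  · rcases Nat.lt_succ_iff_lt_or_eq.mp hi with hi | rfl
    · simpa [hi.le, Nat.succ_le_of_lt hi] using hz i hi
    · simpa [hm] using hab
  · rw [Finset.sum_range_succ]
    congr 1
    · exact Finset.sum_congr rfl fun i hi => by
        have hi := Finset.mem_range.mp hi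
        simp [hi.le, Nat.succ_le_of_lt hi]
    · simp [hm]

lemma partitionSumsUpTo_nonempty (f : ℝ → ℝ) {t : ℝ} (ht : 0 ≤ t) :
    (partitionSumsUpTo f t).Nonempty := by
  rcases ht.eq_or_lt with rfl | ht
  · exact ⟨0, zero_mem_partitionSumsUpTo_zero f⟩
  · exact ⟨_, add_abs_sub_mem_partitionSumsUpTo (zero_mem_partitionSumsUpTo_zero f) ht⟩

section variation

variable {f : ℝ → ℝ} {C : ℝ} (hf : ∀ S ∈ partitionSums f, S ≤ C)
include hf

lemma le_of_mem_partitionSumsUpTo {t S : ℝ} (ht : t ≤ 1) (hS : S ∈ partitionSumsUpTo f t) :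
    S ≤ C := by
  rcases ht.eq_or_lt with rfl | ht
  · exact hf S hS
  · have := hf _ (add_abs_sub_mem_partitionSumsUpTo hS ht)
    linarith [abs_nonneg (f 1 - f t)]

lemma abs_sub_le_variationUpTo_sub {s t : ℝ} (hs : 0 ≤ s) (hst : s ≤ t) (ht : t ≤ 1) :
    |f t - f s| ≤ variationUpTo f t - variationUpTo f s := by
  rcases hst.eq_or_lt with rfl | hst
  · simp
  rw [le_sub_comm]
  refine csSup_le (partitionSumsUpTo_nonempty f hs) fun S hS => le_sub_iff_add_le.mpr ?_
  exact le_csSup ⟨C, fun _ => le_of_mem_partitionSumsUpTo hf ht⟩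
    (add_abs_sub_mem_partitionSumsUpTo hS hst)

lemma variationUpTo_one_sub_zero_le : variationUpTo f 1 - variationUpTo f 0 ≤ C := by
  have h1 : variationUpTo f 1 ≤ C := csSup_le (partitionSumsUpTo_nonempty f zero_le_one) hf
  have h0 : 0 ≤ variationUpTo f 0 :=
    le_csSup ⟨C, fun _ => le_of_mem_partitionSumsUpTo hf zero_le_one⟩
      (zero_mem_partitionSumsUpTo_zero f)
  linarith

end variation

lemma MonotoneOn.exists_monotone_eqOn_Icc {α β : Type*} [LinearOrder α]
    [ConditionallyCompleteLinearOrder β] {f : α → β} {a b : α} (hf : MonotoneOn f (Icc a b))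
    (hab : a ≤ b) : ∃ g : α → β, Monotone g ∧ EqOn f g (Icc a b) :=
  hf.exists_monotone_extension
    ⟨f a, forall_mem_image.2 fun _ hx => hf ⟨le_rfl, hab⟩ hx hx.1⟩
    ⟨f b, forall_mem_image.2 fun _ hx => hf hx ⟨hab, le_rfl⟩ hx.2⟩

/-- Jordan decomposition, with `P = (V + f) / 2` and `N = (V - f) / 2` for the variation
function `V` of `f`. -/
lemma exists_monotone_sub_monotone_of_partitionSums_le {f : ℝ → ℝ} {C : ℝ}
    (hf : ∀ S ∈ partitionSums f, S ≤ C) :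
    ∃ P N : ℝ → ℝ, Monotone P ∧ Monotone N ∧ EqOn f (P - N) (Icc 0 1) ∧
      P 1 - P 0 + (N 1 - N 0) ≤ C := by
  set V := variationUpTo f
  have hV : ∀ x ∈ Icc (0 : ℝ) 1, ∀ y ∈ Icc (0 : ℝ) 1, x ≤ y → |f y - f x| ≤ V y - V x :=
    fun x hx y hy hxy => abs_sub_le_variationUpTo_sub hf hx.1 hxy hy.2
  obtain ⟨P, hP, hPeq⟩ := MonotoneOn.exists_monotone_eqOn_Icc (f := fun x => (V x + f x) / 2)
    (fun x hx y hy hxy => by linarith [(abs_le.mp (hV x hx y hy hxy)).1]) zero_le_one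
  obtain ⟨N, hN, hNeq⟩ := MonotoneOn.exists_monotone_eqOn_Icc (f := fun x => (V x - f x) / 2)
    (fun x hx y hy hxy => by linarith [(abs_le.mp (hV x hx y hy hxy)).2]) zero_le_one
  refine ⟨P, N, hP, hN, fun x hx => ?_, ?_⟩
  · simp only [Pi.sub_apply, ← hPeq hx, ← hNeq hx]
    ring
  · have h0 : (0 : ℝ) ∈ Icc (0 : ℝ) 1 := ⟨le_rfl, zero_le_one⟩
    have h1 : (1 : ℝ) ∈ Icc (0 : ℝ) 1 := ⟨zero_le_one, le_rfl⟩
    rw [← hPeq h0, ← hPeq h1, ← hNeq h0, ← hNeq h1]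
    linarith [variationUpTo_one_sub_zero_le hf]

lemma IsLowerSet.eq_Iic_or_eq_Iio {α : Type*} [ConditionallyCompleteLinearOrder α] {L : Set α}
    (hL : IsLowerSet L) (hne : L.Nonempty) (hbdd : BddAbove L) :
    L = Iic (sSup L) ∨ L = Iio (sSup L) := by
  by_cases hmem : sSup L ∈ L
  · exact .inl (Subset.antisymm (fun x hx => le_csSup hbdd hx) fun x hx => hL hx hmem)
  · refine .inr ?_
    rw [← (isLUB_csSup hne hbdd).biUnion_Iic_eq_Iio hmem]
    exact Subset.antisymm (fun x hx => mem_biUnion hx self_mem_Iic)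
      (iUnion₂_subset fun y hy x hx => hL hx hy)

section thresholds

variable {Ω : Type*} [MeasurableSpace Ω] {μ : Measure Ω} {u q : Ω → ℝ} {c : ℝ}

lemma integral_mul_ite_le_eq_setIntegral (hq : Measurable q) (w : ℝ) :
    ∫ ω, u ω * (if q ω ≤ w then 1 else 0) ∂μ = ∫ ω in q ⁻¹' Iic w, u ω ∂μ := by
  rw [← integral_indicator (measurableSet_Iic.preimage hq)]
  congr with ω
  by_cases h : q ω ≤ w <;> simp [h]

lemma abs_setIntegral_preimage_Iic_le_of_mem_Icc {a b : ℝ} (hab : a ≤ b)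
    (hqab : ∀ ω, q ω ∈ Icc a b) (hc : ∀ s ∈ Icc a b, |∫ ω in q ⁻¹' Iic s, u ω ∂μ| ≤ c)
    (s : ℝ) : |∫ ω in q ⁻¹' Iic s, u ω ∂μ| ≤ c := by
  rcases lt_or_ge s a with hsa | has
  · have : q ⁻¹' Iic s = ∅ := eq_empty_of_forall_notMem fun ω hω => by
      linarith [(hqab ω).1, show q ω ≤ s from hω]
    simpa [this] using (abs_nonneg _).trans (hc a ⟨le_rfl, hab⟩)
  rcases le_or_gt s b with hsb | hbs
  · exact hc s ⟨has, hsb⟩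
  · have hs : q ⁻¹' Iic s = univ := eq_univ_of_forall fun ω => (hqab ω).2.trans hbs.le
    have hb : q ⁻¹' Iic b = univ := eq_univ_of_forall fun ω => (hqab ω).2
    simpa [hs, hb] using hc b ⟨hab, le_rfl⟩

variable (hc : ∀ s, |∫ ω in q ⁻¹' Iic s, u ω ∂μ| ≤ c)
include hc

lemma abs_integral_le_of_forall_le {b : ℝ} (hqb : ∀ ω, q ω ≤ b) : |∫ ω, u ω ∂μ| ≤ c := by
  have : q ⁻¹' Iic b = univ := eq_univ_of_forall hqb
  simpa [this] using hc b

lemma abs_setIntegral_preimage_Iio_le_s4 (hu : Integrable u μ) (hq : Measurable q) (s : ℝ) :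
    |∫ ω in q ⁻¹' Iio s, u ω ∂μ| ≤ c := by
  set x : ℕ → ℝ := fun n => s - 1 / ((n : ℝ) + 1)
  have hx : Tendsto x atTop (nhds s) := by
    simpa [x] using
      (tendsto_const_nhds (x := s)).sub (tendsto_one_div_add_atTop_nhds_zero_nat (𝕜 := ℝ))
  have hunion : ⋃ n, q ⁻¹' Iic (x n) = q ⁻¹' Iio s := by
    rw [← preimage_iUnion, iUnion_Iic_eq_Iio_of_lt_of_tendsto (fun n => by simp [x]; positivity) hx]
  have hmono : Monotone fun n => q ⁻¹' Iic (x n) := fun m n hmn =>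
    preimage_mono (Iic_subset_Iic.mpr (by simp only [x]; gcongr))
  have hlim := tendsto_setIntegral_of_monotone (fun n => measurableSet_Iic.preimage hq) hmono
    hu.integrableOn
  rw [hunion] at hlim
  exact le_of_tendsto' hlim.abs fun n => hc _

lemma abs_setIntegral_preimage_le_of_isLowerSet_s4 (hu : Integrable u μ) (hq : Measurable q)
    {b : ℝ} (hqb : ∀ ω, q ω ≤ b) {L : Set ℝ} (hL : IsLowerSet L) :
    |∫ ω in q ⁻¹' L, u ω ∂μ| ≤ c := by
  rcases L.eq_empty_or_nonempty with rfl | hne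
  · simpa using (abs_nonneg _).trans (hc 0)
  by_cases hbdd : BddAbove L
  · rcases hL.eq_Iic_or_eq_Iio hne hbdd with h | h <;> rw [h]
    exacts [hc _, abs_setIntegral_preimage_Iio_le_s4 hc hu hq _]
  · obtain ⟨y, hy, hby⟩ := not_bddAbove_iff.mp hbdd b
    have : q ⁻¹' L = q ⁻¹' Iic b := by
      ext ω
      simp only [mem_preimage, mem_Iic, hqb ω, iff_true]
      exact hL ((hqb ω).trans hby.le) hy
    rw [this]
    exact hc b

lemma abs_integral_mul_sub_le_of_monotone [SFinite μ] (hu : Integrable u μ) (hq : Measurable q)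
    {a b : ℝ} (hab : a ≤ b) (hqab : ∀ ω, q ω ∈ Icc a b) {A : ℝ → ℝ} (hA : Monotone A) :
    |∫ ω, u ω * (A (q ω) - A a) ∂μ| ≤ 2 * c * (A b - A a) := by
  have hAab : A a ≤ A b := hA hab
  set ν := volume.restrict (Ioc (A a) (A b))
  set F : Ω → ℝ → ℝ := fun ω t => (Iic (A (q ω))).indicator (fun _ => u ω) t
  have hlayer : ∀ ω, u ω * (A (q ω) - A a) = ∫ t, F ω t ∂ν := by
    intro ω
    -- `A (q ω) - A a` is the length of `Ioc (A a) (A b) ∩ Iic (A (q ω))`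
    have hAq : A (q ω) ∈ Icc (A a) (A b) := ⟨hA (hqab ω).1, hA (hqab ω).2⟩
    rw [integral_indicator_const _ measurableSet_Iic, measureReal_restrict_apply measurableSet_Iic,
      inter_comm, Ioc_inter_Iic, inf_eq_right.mpr hAq.2, Real.volume_real_Ioc_of_le hAq.1,
      smul_eq_mul, mul_comm]
  have hF : Integrable (Function.uncurry F) (μ.prod ν) := by
    have hS : MeasurableSet {p : Ω × ℝ | p.2 ≤ A (q p.1)} :=
      measurableSet_le measurable_snd ((hA.measurable.comp hq).comp measurable_fst)
    have hFS : Function.uncurry F = {p : Ω × ℝ | p.2 ≤ A (q p.1)}.indicator fun p => u p.1 := by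
      ext p
      simp [F, Function.uncurry, indicator_apply]
    rw [hFS]
    exact (hu.comp_fst ν).indicator hS
  have hslice : ∀ t, |∫ ω, F ω t ∂μ| ≤ 2 * c := by
    intro t
    have hL : IsLowerSet {x | A x < t} := fun x y hyx hx => (hA hyx).trans_lt hx
    have hmeas : MeasurableSet (q ⁻¹' {x | A x < t}) :=
      (measurableSet_lt hA.measurable measurable_const).preimage hq
    have hFt : (fun ω => F ω t) = (q ⁻¹' {x | A x < t})ᶜ.indicator u := by
      ext ω
      simp [F, indicator_apply]
    rw [hFt, integral_indicator hmeas.compl, setIntegral_compl hmeas hu, two_mul]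
    exact (abs_sub _ _).trans (add_le_add (abs_integral_le_of_forall_le hc fun ω => (hqab ω).2)
      (abs_setIntegral_preimage_le_of_isLowerSet_s4 hc hu hq (fun ω => (hqab ω).2) hL))
  calc |∫ ω, u ω * (A (q ω) - A a) ∂μ| = ‖∫ t, ∫ ω, F ω t ∂μ ∂ν‖ := by
        simp_rw [hlayer]; rw [integral_integral_swap hF, Real.norm_eq_abs]
    _ ≤ 2 * c * ν.real univ := norm_integral_le_of_norm_le_const (.of_forall hslice)
    _ = 2 * c * (A b - A a) := by
        rw [measureReal_restrict_apply_univ, Real.volume_real_Ioc_of_le hAab]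

lemma abs_integral_mul_comp_le_of_partitionSums_le [SFinite μ] (hu : Integrable u μ)
    (hq : Measurable q) (hq01 : ∀ ω, q ω ∈ Icc 0 1) {f : ℝ → ℝ} {C : ℝ}
    (hf : ∀ S ∈ partitionSums f, S ≤ C) :
    |∫ ω, u ω * f (q ω) ∂μ| ≤ (|f 0| + 2 * C) * c := by
  obtain ⟨P, N, hP, hN, hfPN, hPN⟩ := exists_monotone_sub_monotone_of_partitionSums_le hf
  have hc0 : 0 ≤ c := (abs_nonneg _).trans (hc 0)
  have hint : ∀ {A : ℝ → ℝ}, Monotone A → Integrable (fun ω => u ω * (A (q ω) - A 0)) μ :=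
    fun {A} hA => hu.mul_bdd ((hA.measurable.comp hq).sub_const _).aestronglyMeasurable
      (c := A 1 - A 0) (.of_forall fun ω => by
        rw [Real.norm_eq_abs, abs_of_nonneg (sub_nonneg.mpr (hA (hq01 ω).1))]
        exact sub_le_sub_right (hA (hq01 ω).2) _)
  have hsplit : ∫ ω, u ω * f (q ω) ∂μ = ∫ ω, u ω * (P (q ω) - P 0) ∂μ
      - ∫ ω, u ω * (N (q ω) - N 0) ∂μ + f 0 * ∫ ω, u ω ∂μ := by
    have hPN_int : Integrable (fun ω => u ω * (P (q ω) - P 0) - u ω * (N (q ω) - N 0)) μ :=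
      (hint hP).sub (hint hN)
    rw [← integral_sub (hint hP) (hint hN), ← integral_const_mul,
      ← integral_add hPN_int (hu.const_mul _)]
    refine integral_congr_ae (.of_forall fun ω => ?_)
    simp only [hfPN (hq01 ω), hfPN ⟨le_rfl, zero_le_one⟩, Pi.sub_apply]
    ring
  have hPc := abs_integral_mul_sub_le_of_monotone hc hu hq zero_le_one hq01 hP
  have hNc := abs_integral_mul_sub_le_of_monotone hc hu hq zero_le_one hq01 hN
  have hu0 := mul_le_mul_of_nonneg_left
    (abs_integral_le_of_forall_le hc fun ω => (hq01 ω).2) (abs_nonneg (f 0))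
  have hPNc := mul_le_mul_of_nonneg_left hPN (by positivity : 0 ≤ 2 * c)
  calc |∫ ω, u ω * f (q ω) ∂μ|
      ≤ |∫ ω, u ω * (P (q ω) - P 0) ∂μ| + |∫ ω, u ω * (N (q ω) - N 0) ∂μ|
        + |f 0| * |∫ ω, u ω ∂μ| := by
        rw [hsplit, ← abs_mul]
        exact (abs_add_le _ _).trans (add_le_add_left (abs_sub _ _) _)
    _ ≤ (|f 0| + 2 * C) * c := by nlinarith

end thresholds

theorem stmt4_general {X : Type*} [MeasurableSpace X]
    (D : Measure (X × Bool))
    (ε : ℝ)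
    -- a bounded-variation loss
    (ℓ : ℝ → Bool → ℝ)
    (hLbdd : ∀ q ∈ Icc (0:ℝ) 1, ∀ y : Bool, ℓ q y ∈ Icc (-1:ℝ) 1)
    (hLBV : ∀ y : Bool, ∀ S ∈ partitionSums (fun q => ℓ q y), S ≤ 1)
    (G : Set (X → Bool))
    (H : Set (X → ℝ)) (hHmeas : ∀ h ∈ H, Measurable h)
    (hHrange : ∀ h ∈ H, ∀ x, h x ∈ Icc (0:ℝ) 1)
    (p : X → ℝ) (hpmeas : Measurable p) (hprange : ∀ x, p x ∈ Icc (0:ℝ) 1)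
    -- (G, H, ε)-multiaccuracy
    (hma : ∀ w ∈ Icc (0:ℝ) 1, ∀ h ∈ H, ∀ g ∈ G,
      |condE D g (fun z => (lab z.2 - p z.1) * (if h z.1 ≤ w then 1 else 0))| ≤
        ε * Real.sqrt (1 / Pg D g)) :
    ∀ h ∈ H, ∀ g ∈ G,
      |condE D g (fun z => (lab z.2 - p z.1) * (ℓ (h z.1) true - ℓ (h z.1) false))| ≤
        10 * ε * Real.sqrt (1 / Pg D g) := by
  intro h hH g hG
  set μ := D[|{z : X × Bool | g z.1 = true}]
  set c := ε * Real.sqrt (1 / Pg D g)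
  have hq : Measurable fun z : X × Bool => h z.1 := (hHmeas h hH).comp measurable_fst
  have hq01 : ∀ z : X × Bool, h z.1 ∈ Icc (0 : ℝ) 1 := fun z => hHrange h hH z.1
  have hu : Integrable (fun z : X × Bool => lab z.2 - p z.1) μ := by
    refine .of_bound (((measurable_from_top (f := lab)).comp measurable_snd).sub
      (hpmeas.comp measurable_fst)).aestronglyMeasurable 1 (.of_forall fun z => ?_)
    have hl : lab z.2 ∈ Icc (0 : ℝ) 1 := by cases z.2 <;> simp [lab]
    rw [Real.norm_eq_abs, abs_le]
    constructor <;> linarith [hl.1, hl.2, (hprange z.1).1, (hprange z.1).2]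
  have hthr : ∀ s, |∫ z in (fun z : X × Bool => h z.1) ⁻¹' Iic s, lab z.2 - p z.1 ∂μ| ≤ c :=
    abs_setIntegral_preimage_Iic_le_of_mem_Icc zero_le_one hq01
      fun w hw => integral_mul_ite_le_eq_setIntegral hq w ▸ hma w hw h hH g hG
  have hΔ0 : |ℓ 0 true - ℓ 0 false| ≤ 2 := by
    have h₁ := hLbdd 0 ⟨le_rfl, zero_le_one⟩ true
    have h₀ := hLbdd 0 ⟨le_rfl, zero_le_one⟩ false
    exact abs_sub_le_iff.mpr ⟨by linarith [h₁.2, h₀.1], by linarith [h₁.1, h₀.2]⟩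
  have hc0 : 0 ≤ c := (abs_nonneg _).trans (hthr 0)
  calc _ ≤ (|ℓ 0 true - ℓ 0 false| + 2 * (1 + 1)) * c :=
        abs_integral_mul_comp_le_of_partitionSums_le hthr hu hq hq01
          (partitionSums_sub_le (hLBV true) (hLBV false))
    _ ≤ 10 * ε * Real.sqrt (1 / Pg D g) := by nlinarith

/-- **Hypothesis OI.** If `p⋆` is `(G, H, ε)`-multiaccurate, then for every
`h ∈ H` and group `g ∈ G`, `|E[(y - p⋆(x))·Δℓ(h(x)) | g(x)=1]| ≤ 10ε·√(1/P_g)`. -/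
theorem stmt4 {X : Type*} [MeasurableSpace X]
    (D : Measure (X × Bool)) [IsProbabilityMeasure D]
    (ε : ℝ) (hε : 0 < ε)
    -- a bounded-variation loss
    (ℓ : ℝ → Bool → ℝ)
    (hLmeas : ∀ y : Bool, Measurable (fun q => ℓ q y))
    (hLbdd : ∀ q ∈ Icc (0:ℝ) 1, ∀ y : Bool, ℓ q y ∈ Icc (-1:ℝ) 1)
    (hLBV : ∀ y : Bool, ∀ S ∈ partitionSums (fun q => ℓ q y), S ≤ 1)
    (G : Set (X → Bool)) (hGmeas : ∀ g ∈ G, Measurable g)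
    (hGpos : ∀ g ∈ G, 0 < Pg D g)
    (H : Set (X → ℝ)) (hHmeas : ∀ h ∈ H, Measurable h)
    (hHrange : ∀ h ∈ H, ∀ x, h x ∈ Icc (0:ℝ) 1)
    (p : X → ℝ) (hpmeas : Measurable p) (hprange : ∀ x, p x ∈ Icc (0:ℝ) 1)
    -- (G, H, ε)-multiaccuracy
    (hma : ∀ w ∈ Icc (0:ℝ) 1, ∀ h ∈ H, ∀ g ∈ G,
      |condE D g (fun z => (lab z.2 - p z.1) * (if h z.1 ≤ w then 1 else 0))| ≤
        ε * Real.sqrt (1 / Pg D g)) :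
    ∀ h ∈ H, ∀ g ∈ G,
      |condE D g (fun z => (lab z.2 - p z.1) * (ℓ (h z.1) true - ℓ (h z.1) false))| ≤
        10 * ε * Real.sqrt (1 / Pg D g) :=
  stmt4_general D ε ℓ hLbdd hLBV G H hHmeas hHrange p hpmeas hprange hma

end
end

section
/- Let H be a nonempty hypothesis class and G a nonempty set of groups, each with P_g > 0. If a measurable predictor p* ∈ P is an ε-optimal solution to the step-calibration multi-objective learning problem, i.e. sup_{σ,v,w,h,g} E_{(x,y)~D}[ℓ_{σ,v,w,h,g}(p*,(x,y))] ≤ inf_{p ∈ P} sup_{σ,v,w,h,g} E_{(x,y)~D}[ℓ_{σ,v,w,h,g}(p,(x,y))] + ε, then p* is (G,H,ε)-step calibrated. -/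
/-!
The regression function `q x = E[y | x]`, built from the conditional expectation of the label
given the context, makes every objective vanish: each objective is a multiple of the integral of
the residual `y - q x` over an event depending on `x` only. Hence the infimum of the worst-case
objective is at most `0`, and an `ε`-optimal `p` has both objectives `σ = ±1` at most `ε`. The
objective with `σ = 1` is `√P_g` times the conditional calibration error, which gives the bound.
-/

open MeasureTheory ProbabilityTheory Set

noncomputable section

/-- The step-calibration objective `ℓ_{σ,v,w,h,g}` evaluated (in expectation over `D`)
at the predictor `p`. -/
def objective {X : Type*} [MeasurableSpace X] (D : Measure (X × Bool))
    (σ v w : ℝ) (h : X → ℝ) (g : X → Bool) (p : X → ℝ) : ℝ :=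
  ∫ z, σ * (lab z.2 - p z.1) / Real.sqrt (Pg D g) * (if p z.1 ≤ v then 1 else 0) *
      (if h z.1 ≤ w then 1 else 0) * (if g z.1 = true then 1 else 0) ∂D

/-- The worst-case (supremum) objective value of a predictor `p` over all
`σ ∈ {+1,-1}`, `v, w ∈ [0,1]`, `h ∈ H`, `g ∈ G`. -/
def supObj {X : Type*} [MeasurableSpace X] (D : Measure (X × Bool))
    (G : Set (X → Bool)) (H : Set (X → ℝ)) (p : X → ℝ) : ℝ :=
  sSup {r | ∃ σ ∈ ({1, -1} : Set ℝ), ∃ v ∈ Icc (0:ℝ) 1, ∃ w ∈ Icc (0:ℝ) 1,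
    ∃ h ∈ H, ∃ g ∈ G, r = objective D σ v w h g p}


section Regression

variable {X Y : Type*} [MeasurableSpace X] [MeasurableSpace Y]

theorem exists_measurable_setIntegral_fst_preimage_sub_eq_zero (μ : Measure (X × Y))
    [IsFiniteMeasure μ] {F : X × Y → ℝ} (hF : Integrable F μ) (hF01 : ∀ z, F z ∈ Icc (0:ℝ) 1) :
    ∃ q : X → ℝ, Measurable q ∧ (∀ x, q x ∈ Icc (0:ℝ) 1) ∧
      ∀ B : Set X, MeasurableSet B → ∫ z in Prod.fst ⁻¹' B, (F z - q z.1) ∂μ = 0 := by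
  let m : MeasurableSpace (X × Y) := MeasurableSpace.comap Prod.fst ‹_›
  have hm : m ≤ Prod.instMeasurableSpace := measurable_fst.comap_le
  have : IsFiniteMeasure (μ.trim hm) := isFiniteMeasure_trim hm
  obtain ⟨q₀, hq₀, hcomp⟩ :=
    (stronglyMeasurable_condExp (m := m) (μ := μ) (f := F)).measurable.exists_eq_measurable_comp
  have hbounds : ∀ᵐ z ∂μ, 0 ≤ μ[F | m] z ∧ μ[F | m] z ≤ 1 := by
    have h0 : 0 ≤ᵐ[μ] μ[F | m] := condExp_nonneg (ae_of_all _ fun z => (hF01 z).1)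
    have h1 : μ[F | m] ≤ᵐ[μ] μ[fun _ => (1:ℝ) | m] :=
      condExp_mono hF (integrable_const 1) (ae_of_all _ fun z => (hF01 z).2)
    rw [condExp_const hm] at h1
    filter_upwards [h0, h1] with z hz0 hz1 using ⟨hz0, hz1⟩
  -- `μ[F | m]` lies in `[0, 1]` only almost everywhere, hence the clamping.
  refine ⟨fun x => max 0 (min 1 (q₀ x)), measurable_const.max (measurable_const.min hq₀),
    fun x => ⟨le_max_left _ _, max_le zero_le_one (min_le_left _ _)⟩, fun B hB => ?_⟩
  have hclamp : ∀ᵐ z ∂μ, F z - max 0 (min 1 (q₀ z.1)) = F z - μ[F | m] z := by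
    filter_upwards [hbounds] with z ⟨hz0, hz1⟩
    rw [hcomp] at hz0 hz1 ⊢
    simp only [Function.comp_apply] at hz0 hz1 ⊢
    rw [min_eq_right hz1, max_eq_right hz0]
  rw [setIntegral_congr_ae (measurable_fst hB) (hclamp.mono fun z hz _ => hz),
    integral_sub hF.integrableOn integrable_condExp.integrableOn,
    setIntegral_condExp hm hF ⟨B, hB, rfl⟩, sub_self]

end Regression

section StepCalibration

variable {X : Type*}

def stepIntegrand (v w : ℝ) (h q : X → ℝ) (z : X × Bool) : ℝ :=
  (lab z.2 - q z.1) * (if q z.1 ≤ v then 1 else 0) * (if h z.1 ≤ w then 1 else 0)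

lemma lab_mem_Icc (y : Bool) : lab y ∈ Icc (0:ℝ) 1 := by
  cases y <;> simp [lab]

lemma abs_stepIntegrand_le_one {q : X → ℝ} (hq : ∀ x, q x ∈ Icc (0:ℝ) 1) (v w : ℝ)
    (h : X → ℝ) (z : X × Bool) : |stepIntegrand v w h q z| ≤ 1 := by
  have hres : |lab z.2 - q z.1| ≤ 1 := by
    obtain ⟨hl0, hl1⟩ := lab_mem_Icc z.2
    obtain ⟨hq0, hq1⟩ := hq z.1
    rw [abs_le]; constructor <;> linarith
  have hv : |(if q z.1 ≤ v then (1:ℝ) else 0)| ≤ 1 := by split_ifs <;> norm_num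
  have hw : |(if h z.1 ≤ w then (1:ℝ) else 0)| ≤ 1 := by split_ifs <;> norm_num
  rw [stepIntegrand, abs_mul, abs_mul]
  exact mul_le_one₀ (mul_le_one₀ hres (abs_nonneg _) hv) (abs_nonneg _) hw

variable [MeasurableSpace X] (D : Measure (X × Bool))

lemma measurableSet_group {g : X → Bool} (hg : Measurable g) :
    MeasurableSet {z : X × Bool | g z.1 = true} :=
  hg.comp measurable_fst (measurableSet_singleton true)

lemma objective_eq_setIntegral (σ v w : ℝ) (h : X → ℝ) {g : X → Bool} (hg : Measurable g)
    (q : X → ℝ) :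
    objective D σ v w h g q =
      σ / √(Pg D g) * ∫ z in {z : X × Bool | g z.1 = true}, stepIntegrand v w h q z ∂D := by
  rw [objective, ← integral_const_mul, ← integral_indicator (measurableSet_group hg)]
  congr 1 with z
  by_cases hz : g z.1 = true
  · simp only [stepIntegrand, indicator, mem_ofPred_eq, hz, ↓reduceIte, mul_one]
    split_ifs <;> ring
  · simp [indicator, hz]

lemma objective_neg (σ v w : ℝ) (h : X → ℝ) (g : X → Bool) (q : X → ℝ) :
    objective D (-σ) v w h g q = -objective D σ v w h g q := by
  rw [objective, objective, ← integral_neg]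
  congr 1 with z
  ring

lemma condE_eq_setIntegral (g : X → Bool) (f : X × Bool → ℝ) :
    condE D g f = (Pg D g)⁻¹ * ∫ z in {z : X × Bool | g z.1 = true}, f z ∂D := by
  rw [condE, ProbabilityTheory.cond, integral_smul_measure, smul_eq_mul, ENNReal.toReal_inv,
    Pg]

lemma objective_one_eq_sqrt_mul_condE (v w : ℝ) (h : X → ℝ) {g : X → Bool} (hg : Measurable g)
    (q : X → ℝ) (hPg : 0 < Pg D g) :
    objective D 1 v w h g q = √(Pg D g) * condE D g (stepIntegrand v w h q) := by
  rw [objective_eq_setIntegral D 1 v w h hg q, condE_eq_setIntegral, ← mul_assoc]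
  congr 1
  field_simp
  rw [Real.sq_sqrt hPg.le]

lemma abs_objective_le_one [IsProbabilityMeasure D] {σ : ℝ} (hσ : |σ| = 1) (v w : ℝ)
    (h : X → ℝ) {g : X → Bool} (hg : Measurable g) {q : X → ℝ}
    (hq : ∀ x, q x ∈ Icc (0:ℝ) 1) :
    |objective D σ v w h g q| ≤ 1 := by
  have hint : ‖∫ z in {z : X × Bool | g z.1 = true}, stepIntegrand v w h q z ∂D‖ ≤ Pg D g := by
    simpa [Pg, measureReal_def] using norm_setIntegral_le_of_norm_le_const_ae'
      (measure_lt_top D _) (ae_of_all _ fun z _ =>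
        (Real.norm_eq_abs _).trans_le (abs_stepIntegrand_le_one hq v w h z))
  rw [objective_eq_setIntegral D σ v w h hg q, abs_mul, abs_div, hσ,
    abs_of_nonneg (Real.sqrt_nonneg _)]
  calc 1 / √(Pg D g) * |∫ z in {z : X × Bool | g z.1 = true}, stepIntegrand v w h q z ∂D|
      ≤ 1 / √(Pg D g) * Pg D g := by gcongr; exact hint
    _ = √(Pg D g) := by rw [one_div_mul_eq_div, Real.div_sqrt]
    _ ≤ 1 := Real.sqrt_le_one.2 measureReal_le_one

lemma objective_le_supObj [IsProbabilityMeasure D] {G : Set (X → Bool)}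
    (hGmeas : ∀ g ∈ G, Measurable g) (H : Set (X → ℝ)) {q : X → ℝ}
    (hq : ∀ x, q x ∈ Icc (0:ℝ) 1) {σ : ℝ} (hσ : σ ∈ ({1, -1} : Set ℝ)) {v w : ℝ}
    (hv : v ∈ Icc (0:ℝ) 1) (hw : w ∈ Icc (0:ℝ) 1) {h : X → ℝ} (hh : h ∈ H) {g : X → Bool}
    (hg : g ∈ G) :
    objective D σ v w h g q ≤ supObj D G H q := by
  refine le_csSup ⟨1, ?_⟩ ⟨σ, hσ, v, hv, w, hw, h, hh, g, hg, rfl⟩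
  rintro r ⟨σ, hσ, v, -, w, -, h, -, g, hg, rfl⟩
  have hσ1 : |σ| = 1 := by rcases hσ with rfl | rfl <;> norm_num
  exact (abs_le.1 (abs_objective_le_one D hσ1 v w h (hGmeas g hg) hq)).2

end StepCalibration

section BayesPredictor

variable {X : Type*} [MeasurableSpace X] (D : Measure (X × Bool))

lemma objective_eq_zero_of_setIntegral_residual_eq_zero (σ v w : ℝ) {h : X → ℝ}
    (hh : Measurable h) {g : X → Bool} (hg : Measurable g) {q : X → ℝ} (hq : Measurable q)
    (hres : ∀ B : Set X, MeasurableSet B → ∫ z in Prod.fst ⁻¹' B, (lab z.2 - q z.1) ∂D = 0) :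
    objective D σ v w h g q = 0 := by
  set B : Set X := {x | q x ≤ v ∧ h x ≤ w ∧ g x = true}
  have hB : MeasurableSet B := (measurableSet_le hq measurable_const).inter
    ((measurableSet_le hh measurable_const).inter (hg (measurableSet_singleton true)))
  have hstep : {z : X × Bool | g z.1 = true}.indicator (stepIntegrand v w h q) =
      (Prod.fst ⁻¹' B).indicator (fun z => lab z.2 - q z.1) := by
    ext z
    by_cases h1 : q z.1 ≤ v <;> by_cases h2 : h z.1 ≤ w <;> by_cases h3 : g z.1 = true <;>
      simp [indicator, stepIntegrand, B, h1, h2, h3]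
  rw [objective_eq_setIntegral D σ v w h hg q, ← integral_indicator (measurableSet_group hg),
    hstep, integral_indicator (measurable_fst hB), hres B hB, mul_zero]

lemma sInf_supObj_nonpos [IsProbabilityMeasure D] {G : Set (X → Bool)}
    (hGmeas : ∀ g ∈ G, Measurable g) {H : Set (X → ℝ)} (hHmeas : ∀ h ∈ H, Measurable h) :
    sInf {r | ∃ q : X → ℝ, Measurable q ∧ (∀ x, q x ∈ Icc (0:ℝ) 1) ∧
      r = supObj D G H q} ≤ 0 := by
  have hlab : Integrable (fun z : X × Bool => lab z.2) D :=
    .of_mem_Icc 0 1 ((Measurable.of_discrete (f := lab)).comp measurable_snd).aemeasurable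
      (ae_of_all _ fun z => lab_mem_Icc z.2)
  obtain ⟨q, hq, hq01, hres⟩ :=
    exists_measurable_setIntegral_fst_preimage_sub_eq_zero D hlab fun z => lab_mem_Icc z.2
  refine Real.sInf_nonpos' ⟨_, ⟨q, hq, hq01, rfl⟩, Real.sSup_nonpos ?_⟩
  rintro r ⟨σ, -, v, -, w, -, h, hh, g, hg, rfl⟩
  exact (objective_eq_zero_of_setIntegral_residual_eq_zero D σ v w (hHmeas h hh) (hGmeas g hg)
    hq hres).le

end BayesPredictor

theorem stmt5_general {X : Type*} [MeasurableSpace X]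
    (D : Measure (X × Bool)) [IsProbabilityMeasure D]
    (ε : ℝ)
    (G : Set (X → Bool)) (hGmeas : ∀ g ∈ G, Measurable g)
    (hGpos : ∀ g ∈ G, 0 < Pg D g)
    (H : Set (X → ℝ)) (hHmeas : ∀ h ∈ H, Measurable h)
    (p : X → ℝ) (hprange : ∀ x, p x ∈ Icc (0:ℝ) 1)
    -- ε-optimality over the class P of all measurable predictors into [0,1]
    (hopt : supObj D G H p ≤
      sInf {r | ∃ q : X → ℝ, Measurable q ∧ (∀ x, q x ∈ Icc (0:ℝ) 1) ∧
        r = supObj D G H q} + ε) :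
    -- conclusion: (G, H, ε)-step calibration
    ∀ v ∈ Icc (0:ℝ) 1, ∀ w ∈ Icc (0:ℝ) 1, ∀ h ∈ H, ∀ g ∈ G,
      |condE D g (fun z => (lab z.2 - p z.1) * (if p z.1 ≤ v then 1 else 0) *
        (if h z.1 ≤ w then 1 else 0))| ≤ ε * Real.sqrt (1 / Pg D g) := by
  intro v hv w hw h hh g hg
  have hinf := sInf_supObj_nonpos D hGmeas hHmeas
  have hle : ∀ σ ∈ ({1, -1} : Set ℝ), objective D σ v w h g p ≤ ε := fun σ hσ =>
    (objective_le_supObj D hGmeas H hprange hσ hv hw hh hg).trans (by linarith)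
  have habs : |objective D 1 v w h g p| ≤ ε := abs_le.2
    ⟨by linarith [hle (-1) (by simp), objective_neg D 1 v w h g p], hle 1 (by simp)⟩
  have hPg : 0 < √(Pg D g) := Real.sqrt_pos.2 (hGpos g hg)
  rw [objective_one_eq_sqrt_mul_condE D v w h (hGmeas g hg) p (hGpos g hg), abs_mul,
    abs_of_pos hPg] at habs
  rw [one_div, Real.sqrt_inv, ← div_eq_mul_inv, le_div_iff₀ hPg, mul_comm]
  exact habs

/-- An `ε`-optimal solution to the step-calibration multi-objective
learning problem is `(G, H, ε)`-step calibrated. -/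
theorem stmt5 {X : Type*} [MeasurableSpace X]
    (D : Measure (X × Bool)) [IsProbabilityMeasure D]
    (ε : ℝ)
    (G : Set (X → Bool)) (hGne : G.Nonempty) (hGmeas : ∀ g ∈ G, Measurable g)
    (hGpos : ∀ g ∈ G, 0 < Pg D g)
    (H : Set (X → ℝ)) (hHne : H.Nonempty) (hHmeas : ∀ h ∈ H, Measurable h)
    (hHrange : ∀ h ∈ H, ∀ x, h x ∈ Icc (0:ℝ) 1)
    (p : X → ℝ) (hpmeas : Measurable p) (hprange : ∀ x, p x ∈ Icc (0:ℝ) 1)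
    -- ε-optimality over the class P of all measurable predictors into [0,1]
    (hopt : supObj D G H p ≤
      sInf {r | ∃ q : X → ℝ, Measurable q ∧ (∀ x, q x ∈ Icc (0:ℝ) 1) ∧
        r = supObj D G H q} + ε) :
    -- conclusion: (G, H, ε)-step calibration
    ∀ v ∈ Icc (0:ℝ) 1, ∀ w ∈ Icc (0:ℝ) 1, ∀ h ∈ H, ∀ g ∈ G,
      |condE D g (fun z => (lab z.2 - p z.1) * (if p z.1 ≤ v then 1 else 0) *
        (if h z.1 ≤ w then 1 else 0))| ≤ ε * Real.sqrt (1 / Pg D g) :=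
  stmt5_general D ε G hGmeas hGpos H hHmeas p hprange hopt

end
end
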